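/- arXiv:2506.08590 — 6 statements merged into one kernel-verified Lean document; each statement's English description precedes it below -/
import Mathlib

section
/- Let H be a complex Hilbert space and A a bounded positive self-adjoint operator on H (A ≥ 0). Then the operator-valued function t ↦ A(A + t²)⁻¹ is Bochner integrable on (0, ∞) in the space of bounded operators on H, and A^{1/2} = (2/π) ∫₀^∞ A(A + t²)⁻¹ dt. -/
/-!
On the spectrum of `A`, which is a compact subset of `[0, ∞)`, the operator `A (A + t²)⁻¹` is the
continuous functional calculus of `x ↦ x / (x + t²)`, and `∫₀^∞ x / (x + t²) dt = (π / 2) √x` by the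
substitution `t = √x u`. Since `x / (x + t²) ≤ (1 + x) / (1 + t²)`, the integrand is dominated on
the spectrum by an integrable function of `t`, so the integral commutes with the functional
calculus.
-/

open MeasureTheory Set Real

lemma integral_Ioi_mul_inv_add_sq {x : ℝ} (hx : 0 ≤ x) :
    ∫ t in Ioi 0, x * (x + t ^ 2)⁻¹ = π / 2 * √x := by
  rcases hx.eq_or_lt with rfl | hx
  · simp
  have hs : 0 < (√x)⁻¹ := by positivity
  have hrescale (t : ℝ) : x * (x + t ^ 2)⁻¹ = (1 + (t * (√x)⁻¹) ^ 2)⁻¹ := by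
    rw [mul_pow, inv_pow, sq_sqrt hx.le]
    field_simp
  simp_rw [hrescale]
  rw [integral_comp_mul_right_Ioi (fun u => (1 + u ^ 2)⁻¹) 0 hs, zero_mul,
    integral_Ioi_inv_one_add_sq, arctan_zero, sub_zero, inv_inv, smul_eq_mul, mul_comm]

lemma mul_inv_add_sq_le {x : ℝ} (hx : 0 ≤ x) (t : ℝ) :
    x * (x + t ^ 2)⁻¹ ≤ (1 + x) * (1 + t ^ 2)⁻¹ := by
  rcases hx.eq_or_lt with rfl | hx
  · simp only [zero_mul]; positivity
  rw [← div_eq_mul_inv, ← div_eq_mul_inv, div_le_div_iff₀ (by positivity) (by positivity)]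
  nlinarith [sq_nonneg t, sq_nonneg x]

lemma continuousOn_mul_inv_add_sq :
    ContinuousOn (Function.uncurry fun t x : ℝ => x * (x + t ^ 2)⁻¹) (Ioi 0 ×ˢ Ici 0) := by
  rintro ⟨t, x⟩ ⟨ht, hx⟩
  have hne : x + t ^ 2 ≠ 0 := by simp only [mem_Ioi, mem_Ici] at ht hx; positivity
  fun_prop (disch := exact hne)

section Resolvent

variable {R A : Type*} {p : A → Prop} [Field R] [StarRing R] [MetricSpace R]
  [IsTopologicalSemiring R] [ContinuousStar R] [ContinuousInv₀ R] [TopologicalSpace A]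
  [Ring A] [StarRing A] [Algebra R A] [ContinuousFunctionalCalculus R A p]

lemma cfc_mul_inv_add_const (a : A) (c : R) (hc : ∀ x ∈ spectrum R a, x + c ≠ 0)
    (ha : p a := by cfc_tac) :
    cfc (fun x => x * (x + c)⁻¹) a = a * Ring.inverse (a + c • 1) := by
  have hcont : ContinuousOn (fun x => x + c) (spectrum R a) := by fun_prop
  rw [cfc_mul (fun x => x) (fun x => (x + c)⁻¹) a (continuousOn_id' _) (hcont.inv₀ hc),
    cfc_inv _ a hc, cfc_add_const c _ a, cfc_id' R a, Algebra.algebraMap_eq_smul_one]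

end Resolvent

section CStarAlgebra

variable {A : Type*} [CStarAlgebra A] [PartialOrder A] [StarOrderedRing A] {a : A}

lemma exists_norm_mul_inv_add_sq_le (ha : 0 ≤ a) :
    ∃ C, ∀ t, ∀ x ∈ spectrum ℝ a, ‖x * (x + t ^ 2)⁻¹‖ ≤ C * (1 + t ^ 2)⁻¹ := by
  obtain ⟨c, hc⟩ := (spectrum.isCompact (𝕜 := ℝ) a).bddAbove
  refine ⟨1 + c, fun t x hx => ?_⟩
  have hx0 : 0 ≤ x := spectrum_nonneg_of_nonneg ha hx
  rw [Real.norm_of_nonneg (by positivity)]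
  exact (mul_inv_add_sq_le hx0 t).trans (by gcongr; exact hc hx)

lemma continuousOn_mul_inv_add_sq_spectrum (ha : 0 ≤ a) :
    ContinuousOn (Function.uncurry fun t x : ℝ => x * (x + t ^ 2)⁻¹) (Ioi 0 ×ˢ spectrum ℝ a) :=
  continuousOn_mul_inv_add_sq.mono <|
    prod_mono subset_rfl fun _ hx => spectrum_nonneg_of_nonneg ha hx

lemma integrableOn_cfc_mul_inv_add_sq (ha : 0 ≤ a) :
    IntegrableOn (fun t : ℝ => cfc (fun x => x * (x + t ^ 2)⁻¹) a) (Ioi 0) := by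
  obtain ⟨C, hC⟩ := exists_norm_mul_inv_add_sq_le ha
  exact integrableOn_cfc measurableSet_Ioi _ _ a (continuousOn_mul_inv_add_sq_spectrum ha)
    (.of_forall (hC ·)) (integrable_inv_one_add_sq.const_mul C).restrict.hasFiniteIntegral

lemma sqrt_eq_integral_cfc_mul_inv_add_sq (ha : 0 ≤ a) :
    CFC.sqrt a = (2 / π) • ∫ t in Ioi (0 : ℝ), cfc (fun x : ℝ => x * (x + t ^ 2)⁻¹) a := by
  obtain ⟨C, hC⟩ := exists_norm_mul_inv_add_sq_le ha
  rw [← cfc_setIntegral measurableSet_Ioi _ _ a (continuousOn_mul_inv_add_sq_spectrum ha)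
    (.of_forall (hC ·)) (integrable_inv_one_add_sq.const_mul C).restrict.hasFiniteIntegral,
    cfc_congr fun x hx => integral_Ioi_mul_inv_add_sq (spectrum_nonneg_of_nonneg ha hx),
    cfc_const_mul _ _ a, smul_smul, show 2 / π * (π / 2) = 1 by field_simp, one_smul,
    CFC.sqrt_eq_real_sqrt a, cfcₙ_eq_cfc]

end CStarAlgebra

theorem sqrt_eq_integral_resolvent_general
    {H : Type*} [NormedAddCommGroup H] [InnerProductSpace ℂ H] [CompleteSpace H]
    (A : H →L[ℂ] H) (hA0 : 0 ≤ A) :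
    IntegrableOn (fun t : ℝ => A * Ring.inverse (A + t ^ 2 • 1)) (Set.Ioi 0) ∧
      CFC.sqrt A = (2 / Real.pi) • ∫ t in Set.Ioi (0:ℝ), A * Ring.inverse (A + t ^ 2 • 1) := by
  have hres : EqOn (fun t : ℝ => cfc (fun x => x * (x + t ^ 2)⁻¹) A)
      (fun t => A * Ring.inverse (A + t ^ 2 • 1)) (Ioi 0) := fun t ht =>
    cfc_mul_inv_add_const A _ fun x hx =>
      (add_pos_of_nonneg_of_pos (spectrum_nonneg_of_nonneg hA0 hx) (pow_pos ht 2)).ne'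
  exact ⟨(integrableOn_cfc_mul_inv_add_sq hA0).congr_fun hres measurableSet_Ioi,
    by rw [sqrt_eq_integral_cfc_mul_inv_add_sq hA0, setIntegral_congr_fun measurableSet_Ioi hres]⟩

/-- For a bounded positive self-adjoint operator `A` on a complex Hilbert space,
`t ↦ A(A + t²)⁻¹` is Bochner integrable on `(0, ∞)` and
`A^{1/2} = (2/π) ∫₀^∞ A(A + t²)⁻¹ dt`. -/
theorem sqrt_eq_integral_resolvent
    {H : Type*} [NormedAddCommGroup H] [InnerProductSpace ℂ H] [CompleteSpace H]
    (A : H →L[ℂ] H) (hA : IsSelfAdjoint A) (hA0 : 0 ≤ A) :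
    IntegrableOn (fun t : ℝ => A * Ring.inverse (A + t ^ 2 • 1)) (Set.Ioi 0) ∧
      CFC.sqrt A = (2 / Real.pi) • ∫ t in Set.Ioi (0:ℝ), A * Ring.inverse (A + t ^ 2 • 1) :=
  sqrt_eq_integral_resolvent_general A hA0
end

section
/- Let H be a complex Hilbert space, A a bounded self-adjoint operator on H with A ≥ c·Id for some c > 0, ψ ∈ H and α ∈ ℝ such that T_α := A + α|ψ⟩⟨ψ| satisfies T_α ≥ c'·Id for some c' > 0. Then for every t ≥ 0 one has 1 + α⟨ψ, (A + t²)⁻¹ψ⟩ > 0, the operator-valued integrand below is Bochner integrable on (0, ∞), and T_α^{-1/2} = A^{-1/2} − (2α/π) ∫₀^∞ (1 / (1 + α⟨ψ, (A + t²)⁻¹ψ⟩)) · |(A + t²)⁻¹ψ⟩⟨(A + t²)⁻¹ψ| dt. -/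
open scoped InnerProductSpace
open MeasureTheory
set_option synthInstance.maxHeartbeats 1000000
set_option maxHeartbeats 1000000

/-- The rank-one operator `|ψ⟩⟨ψ| : x ↦ ⟨ψ, x⟩ψ`. -/
noncomputable def rankOne {H : Type*} [NormedAddCommGroup H] [InnerProductSpace ℂ H]
    (ψ : H) : H →L[ℂ] H := (innerSL ℂ ψ).smulRight ψ

/-!
Both inverse square roots come from the scalar identity `x^{-1/2} = (2/π) ∫₀^∞ (x + t²)⁻¹ dt`
pushed through the continuous functional calculus, so `T^{-1/2} - A^{-1/2}` is `2/π` times the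
integral of `(T + t²)⁻¹ - (A + t²)⁻¹`. By the Sherman–Morrison formula this difference is
`-α (1 + α r_t)⁻¹ |x_t⟩⟨x_t|`, where `x_t = (A + t²)⁻¹ψ` and `r_t = ⟨ψ, x_t⟩ ≥ 0`. Testing
`T + t² ≥ c'` on `x_t` gives `c' ‖x_t‖² ≤ (1 + α r_t) r_t`, which yields both the positivity of
`1 + α r_t` and the integrable bound `‖ψ‖² / (c' (c + t²))` on the integrand.
-/

open Set

lemma integrableOn_Ioi_inv_add_sq {x : ℝ} (hx : 0 < x) :
    IntegrableOn (fun t : ℝ => (x + t ^ 2)⁻¹) (Ioi 0) := by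
  refine (integrable_inv_one_add_sq.const_mul (min x 1)⁻¹).integrableOn.mono'
    (by fun_prop (disch := intro t; positivity)) (ae_of_all _ fun t => ?_)
  have : 0 < min x 1 := lt_min hx one_pos
  rw [Real.norm_of_nonneg (by positivity), ← mul_inv]
  gcongr
  nlinarith [min_le_left x 1, min_le_right x 1, sq_nonneg t]

lemma integral_Ioi_inv_add_sq {x : ℝ} (hx : 0 < x) :
    ∫ t in Ioi (0 : ℝ), (x + t ^ 2)⁻¹ = Real.pi / 2 * (√x)⁻¹ := by
  have hs : 0 < √x := Real.sqrt_pos.mpr hx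
  have hscale : ∀ u : ℝ, (x + (√x * u) ^ 2)⁻¹ = x⁻¹ * (1 + u ^ 2)⁻¹ := fun u => by
    rw [mul_pow, Real.sq_sqrt hx.le, ← mul_inv, mul_one_add]
  have hsub := integral_comp_mul_left_Ioi (fun t => (x + t ^ 2)⁻¹) 0 hs
  simp only [hscale, integral_const_mul, integral_Ioi_inv_one_add_sq, mul_zero,
    Real.arctan_zero, sub_zero, smul_eq_mul] at hsub
  rw [eq_inv_mul_iff_mul_eq₀ hs.ne'] at hsub
  rw [← hsub]
  field_simp
  rw [Real.sq_sqrt hx.le]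

lemma norm_inv_add_sq_le {c x : ℝ} (hc : 0 < c) (hx : c ≤ x) (t : ℝ) :
    ‖(x + t ^ 2)⁻¹‖ ≤ (c + t ^ 2)⁻¹ := by
  have hx₀ : 0 < x := hc.trans_le hx
  rw [Real.norm_of_nonneg (by positivity)]
  gcongr

lemma continuousOn_uncurry_inv_add_sq {S X : Set ℝ} (hX : ∀ x ∈ X, 0 < x) :
    ContinuousOn (Function.uncurry fun t x : ℝ => (x + t ^ 2)⁻¹) (S ×ˢ X) :=
  (by fun_prop : Continuous fun p : ℝ × ℝ => p.2 + p.1 ^ 2).continuousOn.inv₀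
    fun p hp => (add_pos_of_pos_of_nonneg (hX _ hp.2) (sq_nonneg _)).ne'

section CStarAlgebra

variable {A : Type*} [CStarAlgebra A] [PartialOrder A] [StarOrderedRing A] {a : A} {c : ℝ}

lemma isSelfAdjoint_of_smul_one_le (h : c • (1 : A) ≤ a) : IsSelfAdjoint a := by
  simpa using (IsSelfAdjoint.of_nonneg (sub_nonneg.mpr h)).add
    ((IsSelfAdjoint.all c).smul (.one A))

lemma le_of_mem_spectrum_of_smul_one_le (h : c • (1 : A) ≤ a) {x : ℝ}
    (hx : x ∈ spectrum ℝ a) : c ≤ x := by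
  have ha : IsSelfAdjoint a := isSelfAdjoint_of_smul_one_le h
  rw [← Algebra.algebraMap_eq_smul_one, algebraMap_le_iff_le_spectrum] at h
  exact h x hx

lemma pos_of_mem_spectrum_of_smul_one_le (hc : 0 < c) (h : c • (1 : A) ≤ a) {x : ℝ}
    (hx : x ∈ spectrum ℝ a) : 0 < x :=
  hc.trans_le (le_of_mem_spectrum_of_smul_one_le h hx)

lemma isStrictlyPositive_of_smul_one_le (hc : 0 < c) (h : c • (1 : A) ≤ a) :
    IsStrictlyPositive a :=
  (isStrictlyPositive_algebraMap hc).of_le (by rwa [Algebra.algebraMap_eq_smul_one])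

lemma smul_one_add_sq_le (h : c • (1 : A) ≤ a) (t : ℝ) :
    (c + t ^ 2) • (1 : A) ≤ a + t ^ 2 • 1 := by
  rw [add_smul]
  exact add_le_add_left h _

lemma smul_one_le_add_sq_add {b : A} (h : c • (1 : A) ≤ a + b) (t : ℝ) :
    c • (1 : A) ≤ a + t ^ 2 • 1 + b := by
  rw [add_right_comm]
  exact le_add_of_le_of_nonneg h (smul_nonneg (sq_nonneg t) zero_le_one)

lemma norm_ringInverse_le (hc : 0 < c) (h : c • (1 : A) ≤ a) : ‖Ring.inverse a‖ ≤ c⁻¹ := by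
  have ha : IsSelfAdjoint a := isSelfAdjoint_of_smul_one_le h
  rw [← cfc_id' ℝ a, ← cfc_inv _ a fun x hx => (pos_of_mem_spectrum_of_smul_one_le hc h hx).ne']
  refine norm_cfc_le (by positivity) fun x hx => ?_
  have hcx := le_of_mem_spectrum_of_smul_one_le h hx
  rw [Real.norm_of_nonneg (inv_nonneg.mpr (hc.le.trans hcx))]
  exact inv_anti₀ hc hcx

lemma continuous_ringInverse_add_sq (hc : 0 < c) (h : c • (1 : A) ≤ a) :
    Continuous fun t : ℝ => Ring.inverse (a + t ^ 2 • 1) :=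
  continuous_iff_continuousAt.mpr fun t =>
    (NormedRing.inverse_continuousAt (isStrictlyPositive_of_smul_one_le (by positivity)
      (smul_one_add_sq_le h t)).isUnit.unit).comp_of_eq
      (by fun_prop : Continuous fun t : ℝ => a + t ^ 2 • 1).continuousAt rfl

lemma ringInverse_add_sq_eq_cfc (hc : 0 < c) (h : c • (1 : A) ≤ a) (t : ℝ) :
    Ring.inverse (a + t ^ 2 • 1) = cfc (fun x : ℝ => (x + t ^ 2)⁻¹) a := by
  have ha : IsSelfAdjoint a := isSelfAdjoint_of_smul_one_le h
  rw [cfc_inv (fun x : ℝ => x + t ^ 2) a fun x hx =>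
      (add_pos_of_pos_of_nonneg (pos_of_mem_spectrum_of_smul_one_le hc h hx) (sq_nonneg t)).ne',
    cfc_add_const .., cfc_id' ℝ a, Algebra.algebraMap_eq_smul_one]

lemma sqrt_ringInverse_eq_cfc (hc : 0 < c) (h : c • (1 : A) ≤ a) :
    CFC.sqrt (Ring.inverse a) = cfc (fun x : ℝ => (√x)⁻¹) a := by
  have ha : IsSelfAdjoint a := isSelfAdjoint_of_smul_one_le h
  have ha₀ : 0 ≤ a := (isStrictlyPositive_of_smul_one_le hc h).nonneg
  rw [CFC.sqrt_ringInverse, CFC.sqrt_eq_real_sqrt a, cfcₙ_eq_cfc, cfc_inv (fun x : ℝ => √x) a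
    fun x hx => (Real.sqrt_pos.mpr (pos_of_mem_spectrum_of_smul_one_le hc h hx)).ne']

lemma integrableOn_ringInverse_add_sq (hc : 0 < c) (h : c • (1 : A) ≤ a) :
    IntegrableOn (fun t : ℝ => Ring.inverse (a + t ^ 2 • 1)) (Ioi 0) := by
  have ha : IsSelfAdjoint a := isSelfAdjoint_of_smul_one_le h
  simp_rw [ringInverse_add_sq_eq_cfc hc h]
  exact integrableOn_cfc measurableSet_Ioi _ _ a
    (continuousOn_uncurry_inv_add_sq fun x => pos_of_mem_spectrum_of_smul_one_le hc h)
    (ae_of_all _ fun t x hx => norm_inv_add_sq_le hc (le_of_mem_spectrum_of_smul_one_le h hx) t)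
    (integrableOn_Ioi_inv_add_sq hc).hasFiniteIntegral

lemma sqrt_ringInverse_eq_integral (hc : 0 < c) (h : c • (1 : A) ≤ a) :
    CFC.sqrt (Ring.inverse a) =
      (2 / Real.pi) • ∫ t in Ioi (0 : ℝ), Ring.inverse (a + t ^ 2 • 1) := by
  have ha : IsSelfAdjoint a := isSelfAdjoint_of_smul_one_le h
  have hspec (x : ℝ) (hx : x ∈ spectrum ℝ a) : 0 < x := pos_of_mem_spectrum_of_smul_one_le hc h hx
  have hcfc : ∫ t in Ioi (0 : ℝ), Ring.inverse (a + t ^ 2 • 1) =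
      cfc (fun x : ℝ => ∫ t in Ioi (0 : ℝ), (x + t ^ 2)⁻¹) a := by
    simp_rw [ringInverse_add_sq_eq_cfc hc h]
    exact (cfc_setIntegral measurableSet_Ioi _ _ a (continuousOn_uncurry_inv_add_sq hspec)
      (ae_of_all _ fun t x hx => norm_inv_add_sq_le hc (le_of_mem_spectrum_of_smul_one_le h hx) t)
      (integrableOn_Ioi_inv_add_sq hc).hasFiniteIntegral).symm
  rw [hcfc, cfc_congr fun x hx => integral_Ioi_inv_add_sq (hspec x hx),
    cfc_const_mul (Real.pi / 2) (fun x : ℝ => (√x)⁻¹) a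
      (Real.continuous_sqrt.continuousOn.inv₀ fun x hx => (Real.sqrt_pos.mpr (hspec x hx)).ne'),
    smul_smul, div_mul_div_cancel₀ Real.pi_pos.ne', div_self two_ne_zero, one_smul,
    sqrt_ringInverse_eq_cfc hc h]

end CStarAlgebra

lemma ContinuousLinearMap.apply_ringInverse_apply {R M : Type*} [Semiring R] [TopologicalSpace M]
    [AddCommMonoid M] [ContinuousAdd M] [Module R M] {f : M →L[R] M} (hf : IsUnit f) (y : M) :
    f (Ring.inverse f y) = y := by
  rw [← mul_apply_eq_comp, Ring.mul_inverse_cancel _ hf, one_apply_eq_self]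

section HilbertSpace

variable {H : Type*} [NormedAddCommGroup H] [InnerProductSpace ℂ H]

lemma rankOne_apply (ψ x : H) : rankOne ψ x = ⟪ψ, x⟫_ℂ • ψ := rfl

lemma norm_rankOne (ψ : H) : ‖rankOne ψ‖ = ‖ψ‖ ^ 2 :=
  (InnerProductSpace.norm_rankOne (𝕜 := ℂ) ψ ψ).trans (sq _).symm

lemma continuous_rankOne : Continuous (rankOne : H → H →L[ℂ] H) := by
  unfold rankOne
  fun_prop

lemma mul_norm_sq_le_re_inner_self_apply {S : H →L[ℂ] H} {c : ℝ} (h : c • 1 ≤ S) (x : H) :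
    c * ‖x‖ ^ 2 ≤ (⟪x, S x⟫_ℂ).re := by
  have := (ContinuousLinearMap.le_def _ _).mp h |>.re_inner_nonneg_right x
  have hx : (⟪x, c • x⟫_ℂ).re = c * ‖x‖ ^ 2 := by
    rw [← Complex.coe_smul, inner_smul_right, Complex.re_ofReal_mul, ← RCLike.re_to_complex,
      inner_self_eq_norm_sq]
  simp only [sub_apply, smul_apply, one_apply_eq_self, inner_sub_right, map_sub,
    RCLike.re_to_complex, hx] at this
  linarith

variable [CompleteSpace H]

lemma inner_self_apply_eq_ofReal_re {S : H →L[ℂ] H} (hS : IsSelfAdjoint S) (x : H) :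
    ⟪x, S x⟫_ℂ = (⟪x, S x⟫_ℂ).re := by
  refine (Complex.conj_eq_iff_re.mp ?_).symm
  rw [inner_conj_symm]
  exact ContinuousLinearMap.isSelfAdjoint_iff_isSymmetric.mp hS x x

noncomputable def shermanMorrisonCorrection (B : H →L[ℂ] H) (α : ℝ) (ψ : H) : H →L[ℂ] H :=
  ((1 : ℂ) / (1 + (α : ℂ) * ⟪ψ, Ring.inverse B ψ⟫_ℂ)) • rankOne (Ring.inverse B ψ)

variable {B : H →L[ℂ] H} {α c c' : ℝ} {ψ : H}

lemma ringInverse_add_smul_rankOne (hB : IsSelfAdjoint B) (hBu : IsUnit B)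
    (hu : IsUnit (B + α • rankOne ψ)) (hd : 1 + (α : ℂ) * ⟪ψ, Ring.inverse B ψ⟫_ℂ ≠ 0) :
    Ring.inverse (B + α • rankOne ψ) = Ring.inverse B - α • shermanMorrisonCorrection B α ψ := by
  have hQ (y : H) : ⟪ψ, Ring.inverse B y⟫_ℂ = ⟪Ring.inverse B ψ, y⟫_ℂ :=
    (ContinuousLinearMap.isSelfAdjoint_iff_isSymmetric.mp hB.ringInverse ψ y).symm
  have hright :
      (B + α • rankOne ψ) * (Ring.inverse B - α • shermanMorrisonCorrection B α ψ) = 1 := by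
    ext y
    simp only [shermanMorrisonCorrection, mul_apply_eq_comp, add_apply, sub_apply, smul_apply,
      rankOne_apply, one_apply_eq_self, map_sub, map_smul, hQ, ← Complex.coe_smul, smul_smul,
      ContinuousLinearMap.apply_ringInverse_apply hBu]
    rw [hQ] at hd
    match_scalars
    · ring
    · field_simp
      ring
  calc Ring.inverse (B + α • rankOne ψ)
      = Ring.inverse (B + α • rankOne ψ) * ((B + α • rankOne ψ) *
          (Ring.inverse B - α • shermanMorrisonCorrection B α ψ)) := by rw [hright, mul_one]
    _ = Ring.inverse B - α • shermanMorrisonCorrection B α ψ := Ring.inverse_mul_cancel_left _ _ hu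

lemma mul_norm_sq_ringInverse_apply_le (hB : IsSelfAdjoint B) (hBu : IsUnit B)
    (hT : c' • 1 ≤ B + α • rankOne ψ) :
    c' * ‖Ring.inverse B ψ‖ ^ 2 ≤
      (1 + α * (⟪ψ, Ring.inverse B ψ⟫_ℂ).re) * (⟪ψ, Ring.inverse B ψ⟫_ℂ).re := by
  obtain ⟨r, hr⟩ : ∃ r : ℝ, ⟪ψ, Ring.inverse B ψ⟫_ℂ = r :=
    ⟨_, inner_self_apply_eq_ofReal_re hB.ringInverse ψ⟩
  have hr' : ⟪Ring.inverse B ψ, ψ⟫_ℂ = r := by rw [← inner_conj_symm, hr, Complex.conj_ofReal]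
  have h := mul_norm_sq_le_re_inner_self_apply hT (Ring.inverse B ψ)
  rw [add_apply, smul_apply, rankOne_apply, ContinuousLinearMap.apply_ringInverse_apply hBu,
    ← Complex.coe_smul, smul_smul, inner_add_right, inner_smul_right, hr, hr'] at h
  rw [hr, Complex.ofReal_re]
  norm_cast at h
  linarith

lemma one_add_mul_inner_ringInverse_eq_ofReal (hB : IsSelfAdjoint B) (α : ℝ) (ψ : H) :
    1 + (α : ℂ) * ⟪ψ, Ring.inverse B ψ⟫_ℂ =
      ((1 + α * (⟪ψ, Ring.inverse B ψ⟫_ℂ).re : ℝ) : ℂ) := by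
  rw [inner_self_apply_eq_ofReal_re hB.ringInverse ψ]
  push_cast
  rfl

lemma one_add_mul_re_inner_ringInverse_pos (hB : IsStrictlyPositive B) (hc' : 0 < c')
    (hT : c' • 1 ≤ B + α • rankOne ψ) : 0 < 1 + α * (⟪ψ, Ring.inverse B ψ⟫_ℂ).re := by
  rcases eq_or_ne ψ 0 with rfl | hψ
  · simp
  have hr : 0 ≤ (⟪ψ, Ring.inverse B ψ⟫_ℂ).re :=
    ((ContinuousLinearMap.nonneg_iff_isPositive _).mp
      hB.ringInverse.nonneg).re_inner_nonneg_right ψ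
  have hx : Ring.inverse B ψ ≠ 0 := fun h0 => hψ <| by
    rw [← ContinuousLinearMap.apply_ringInverse_apply hB.isUnit ψ, h0, map_zero]
  refine pos_of_mul_pos_left (lt_of_lt_of_le ?_
    (mul_norm_sq_ringInverse_apply_le hB.isSelfAdjoint hB.isUnit hT)) hr
  exact mul_pos hc' (pow_pos (norm_pos_iff.mpr hx) 2)

lemma one_add_mul_inner_ringInverse_ne_zero (hB : IsStrictlyPositive B) (hc' : 0 < c')
    (hT : c' • 1 ≤ B + α • rankOne ψ) : 1 + (α : ℂ) * ⟪ψ, Ring.inverse B ψ⟫_ℂ ≠ 0 := by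
  rw [one_add_mul_inner_ringInverse_eq_ofReal hB.isSelfAdjoint]
  exact_mod_cast (one_add_mul_re_inner_ringInverse_pos hB hc' hT).ne'

lemma re_inner_ringInverse_le (hc : 0 < c) (hB : c • 1 ≤ B) (ψ : H) :
    (⟪ψ, Ring.inverse B ψ⟫_ℂ).re ≤ ‖ψ‖ ^ 2 / c :=
  calc (⟪ψ, Ring.inverse B ψ⟫_ℂ).re
      ≤ ‖ψ‖ * ‖Ring.inverse B ψ‖ := (Complex.re_le_norm _).trans (norm_inner_le_norm _ _)
    _ ≤ ‖ψ‖ * (c⁻¹ * ‖ψ‖) := by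
      gcongr
      exact (Ring.inverse B).le_of_opNorm_le (norm_ringInverse_le hc hB) ψ
    _ = ‖ψ‖ ^ 2 / c := by ring

lemma norm_shermanMorrisonCorrection_le (hc : 0 < c) (hB : c • 1 ≤ B) (hc' : 0 < c')
    (hT : c' • 1 ≤ B + α • rankOne ψ) :
    ‖shermanMorrisonCorrection B α ψ‖ ≤ ‖ψ‖ ^ 2 / (c * c') := by
  have hBpos := isStrictlyPositive_of_smul_one_le hc hB
  have hd := one_add_mul_re_inner_ringInverse_pos hBpos hc' hT
  have key := mul_norm_sq_ringInverse_apply_le hBpos.isSelfAdjoint hBpos.isUnit hT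
  rw [shermanMorrisonCorrection, one_add_mul_inner_ringInverse_eq_ofReal hBpos.isSelfAdjoint,
    norm_smul, norm_rankOne, ← Complex.ofReal_one, ← Complex.ofReal_div, Complex.norm_real,
    Real.norm_of_nonneg (by positivity), one_div_mul_eq_div]
  calc ‖Ring.inverse B ψ‖ ^ 2 / (1 + α * (⟪ψ, Ring.inverse B ψ⟫_ℂ).re)
      ≤ (⟪ψ, Ring.inverse B ψ⟫_ℂ).re / c' := by
        rw [div_le_div_iff₀ hd hc']
        linarith
    _ ≤ ‖ψ‖ ^ 2 / c / c' := by gcongr; exact re_inner_ringInverse_le hc hB ψ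
    _ = ‖ψ‖ ^ 2 / (c * c') := div_div _ _ _

lemma integrableOn_shermanMorrisonCorrection_add_sq (hc : 0 < c) (hB : c • 1 ≤ B)
    (hc' : 0 < c') (hT : c' • 1 ≤ B + α • rankOne ψ) :
    IntegrableOn (fun t : ℝ => shermanMorrisonCorrection (B + t ^ 2 • 1) α ψ) (Ioi 0) := by
  have hBt (t : ℝ) := smul_one_add_sq_le hB t
  have hQψ : Continuous fun t : ℝ => Ring.inverse (B + t ^ 2 • 1) ψ :=
    (continuous_ringInverse_add_sq hc hB).clm_apply continuous_const
  have hd (t : ℝ) : 1 + (α : ℂ) * ⟪ψ, Ring.inverse (B + t ^ 2 • 1) ψ⟫_ℂ ≠ 0 :=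
    one_add_mul_inner_ringInverse_ne_zero
      (isStrictlyPositive_of_smul_one_le (by positivity) (hBt t)) hc' (smul_one_le_add_sq_add hT t)
  have hcont : Continuous fun t : ℝ => shermanMorrisonCorrection (B + t ^ 2 • 1) α ψ :=
    (continuous_const.div (continuous_const.add (continuous_const.mul
      (continuous_const.inner hQψ))) hd).smul (continuous_rankOne.comp hQψ)
  refine ((integrableOn_Ioi_inv_add_sq hc).const_mul (‖ψ‖ ^ 2 / c')).mono'
    hcont.aestronglyMeasurable (ae_of_all _ fun t => ?_)
  refine (norm_shermanMorrisonCorrection_le (by positivity) (hBt t) hc'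
    (smul_one_le_add_sq_add hT t)).trans_eq ?_
  field_simp

end HilbertSpace

theorem inv_sqrt_rank_one_perturbation_general
    {H : Type*} [NormedAddCommGroup H] [InnerProductSpace ℂ H] [CompleteSpace H]
    (A : H →L[ℂ] H) (c : ℝ) (hc : 0 < c)
    (hAc : c • (1 : H →L[ℂ] H) ≤ A) (ψ : H) (α : ℝ)
    (T : H →L[ℂ] H) (hT : T = A + α • rankOne ψ)
    (c' : ℝ) (hc' : 0 < c') (hTc : c' • (1 : H →L[ℂ] H) ≤ T) :
    (∀ t : ℝ, 0 ≤ t →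
        (1 + (α : ℂ) * ⟪ψ, (Ring.inverse (A + t ^ 2 • 1)) ψ⟫_ℂ).im = 0 ∧
        0 < (1 + (α : ℂ) * ⟪ψ, (Ring.inverse (A + t ^ 2 • 1)) ψ⟫_ℂ).re) ∧
    IntegrableOn (fun t : ℝ =>
        ((1 : ℂ) / (1 + (α : ℂ) * ⟪ψ, (Ring.inverse (A + t ^ 2 • 1)) ψ⟫_ℂ)) •
          rankOne ((Ring.inverse (A + t ^ 2 • 1)) ψ)) (Set.Ioi 0) ∧
    CFC.sqrt (Ring.inverse T) = CFC.sqrt (Ring.inverse A) - (2 * α / Real.pi) •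
      ∫ t in Set.Ioi (0:ℝ),
        ((1 : ℂ) / (1 + (α : ℂ) * ⟪ψ, (Ring.inverse (A + t ^ 2 • 1)) ψ⟫_ℂ)) •
          rankOne ((Ring.inverse (A + t ^ 2 • 1)) ψ) := by
  subst hT
  simp only [← shermanMorrisonCorrection.eq_1]
  have hApos (t : ℝ) : IsStrictlyPositive (A + t ^ 2 • 1) :=
    isStrictlyPositive_of_smul_one_le (by positivity) (smul_one_add_sq_le hAc t)
  have hTt (t : ℝ) : c' • 1 ≤ A + t ^ 2 • 1 + α • rankOne ψ := smul_one_le_add_sq_add hTc t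
  have hint := integrableOn_shermanMorrisonCorrection_add_sq hc hAc hc' hTc
  refine ⟨fun t _ => ?_, hint, ?_⟩
  · rw [one_add_mul_inner_ringInverse_eq_ofReal (hApos t).isSelfAdjoint]
    exact ⟨Complex.ofReal_im _,
      by simpa using one_add_mul_re_inner_ringInverse_pos (hApos t) hc' (hTt t)⟩
  have hSM (t : ℝ) : Ring.inverse (A + α • rankOne ψ + t ^ 2 • 1) =
      Ring.inverse (A + t ^ 2 • 1) - α • shermanMorrisonCorrection (A + t ^ 2 • 1) α ψ := by
    rw [add_right_comm]
    exact ringInverse_add_smul_rankOne (hApos t).isSelfAdjoint (hApos t).isUnit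
      (isStrictlyPositive_of_smul_one_le hc' (hTt t)).isUnit
      (one_add_mul_inner_ringInverse_ne_zero (hApos t) hc' (hTt t))
  have hint' : IntegrableOn
      (fun t : ℝ => α • shermanMorrisonCorrection (A + t ^ 2 • 1) α ψ) (Ioi 0) := hint.smul α
  rw [sqrt_ringInverse_eq_integral hc' hTc, sqrt_ringInverse_eq_integral hc hAc,
    setIntegral_congr_fun measurableSet_Ioi fun t _ => hSM t,
    integral_sub (integrableOn_ringInverse_add_sq hc hAc) hint', integral_smul, smul_sub,
    smul_smul, div_mul_eq_mul_div]

/-- Integral formula for the inverse square root of a rank-one perturbation: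
if `A ≥ c·Id` (`c > 0`) and `T = A + α|ψ⟩⟨ψ| ≥ c'·Id` (`c' > 0`), then for every
`t ≥ 0` the scalar `1 + α⟨ψ, (A+t²)⁻¹ψ⟩` is a positive real number, the operator-valued
integrand is Bochner integrable on `(0,∞)`, and
`T^{-1/2} = A^{-1/2} − (2α/π) ∫₀^∞ (1/(1 + α⟨ψ,(A+t²)⁻¹ψ⟩)) |(A+t²)⁻¹ψ⟩⟨(A+t²)⁻¹ψ| dt`. -/
theorem inv_sqrt_rank_one_perturbation
    {H : Type*} [NormedAddCommGroup H] [InnerProductSpace ℂ H] [CompleteSpace H]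
    (A : H →L[ℂ] H) (hA : IsSelfAdjoint A) (c : ℝ) (hc : 0 < c)
    (hAc : c • (1 : H →L[ℂ] H) ≤ A) (ψ : H) (α : ℝ)
    (T : H →L[ℂ] H) (hT : T = A + α • rankOne ψ)
    (c' : ℝ) (hc' : 0 < c') (hTc : c' • (1 : H →L[ℂ] H) ≤ T) :
    (∀ t : ℝ, 0 ≤ t →
        (1 + (α : ℂ) * ⟪ψ, (Ring.inverse (A + t ^ 2 • 1)) ψ⟫_ℂ).im = 0 ∧
        0 < (1 + (α : ℂ) * ⟪ψ, (Ring.inverse (A + t ^ 2 • 1)) ψ⟫_ℂ).re) ∧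
    IntegrableOn (fun t : ℝ =>
        ((1 : ℂ) / (1 + (α : ℂ) * ⟪ψ, (Ring.inverse (A + t ^ 2 • 1)) ψ⟫_ℂ)) •
          rankOne ((Ring.inverse (A + t ^ 2 • 1)) ψ)) (Set.Ioi 0) ∧
    CFC.sqrt (Ring.inverse T) = CFC.sqrt (Ring.inverse A) - (2 * α / Real.pi) •
      ∫ t in Set.Ioi (0:ℝ),
        ((1 : ℂ) / (1 + (α : ℂ) * ⟪ψ, (Ring.inverse (A + t ^ 2 • 1)) ψ⟫_ℂ)) •
          rankOne ((Ring.inverse (A + t ^ 2 • 1)) ψ) :=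
  inv_sqrt_rank_one_perturbation_general A c hc hAc ψ α T hT c' hc' hTc
end

section
/- Let (X, μ) be a measure space, ω : X → ℝ measurable with ω(x) ≥ 1 for μ-a.e. x, f : X → ℂ measurable with ∫_X ω^{-1/2}|f|² dμ < ∞, and λ ≥ 0. For t ≥ 0 set G₁(t) = ∫_X ω|f|²/(ω² + t²) dμ and G₂(t) = ∫_X ω|f|²/(ω² + t²)² dμ. Then ∫₀^∞ t² · G₂(t) · G₁(t) / (1 + 4λ·G₁(t)) dt ≤ (π/√2) · (∫_X ω^{-1/2}|f|² dμ)². -/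
/-!
Let `ν` be `μ` with density `ω^{-1/2}|f|²`, a finite measure, and `φₜ = ω^{3/2}/(ω² + t²)`.
Both `G₁(t)` and `t² G₂(t)` are at most `∫ φₜ dν`, so after dropping the denominator
`1 + 4λG₁ ≥ 1`, Cauchy–Schwarz in `ν` bounds the integrand by
`ν(X) ∫ φₜ² dν ≤ ν(X) ∫ ω/(ω² + t²) dν`. By Tonelli and `∫₀^∞ a/(a² + t²) dt = π/2`, the
`t`-integral is at most `(π/2) ν(X)² ≤ (π/√2) ν(X)²`.
-/
open MeasureTheory Set Filter Real
open scoped ENNReal Topology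

lemma lintegral_Ioi_div_sq_add_sq {a : ℝ} (ha : 0 < a) :
    ∫⁻ t in Ioi (0 : ℝ), ENNReal.ofReal (a / (a ^ 2 + t ^ 2)) = ENNReal.ofReal (π / 2) := by
  have hderiv : ∀ t ∈ Ici (0 : ℝ),
      HasDerivAt (fun t => arctan (t / a)) (a / (a ^ 2 + t ^ 2)) t := fun t _ => by
    convert ((hasDerivAt_id' t).div_const a).arctan using 1
    field_simp
  have hnonneg : ∀ t ∈ Ioi (0 : ℝ), 0 ≤ a / (a ^ 2 + t ^ 2) := fun t _ => by positivity
  have hlim : Tendsto (fun t => arctan (t / a)) atTop (𝓝 (π / 2)) :=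
    (tendsto_nhds_of_tendsto_nhdsWithin tendsto_arctan_atTop).comp
      (tendsto_id.atTop_div_const ha)
  rw [← ofReal_integral_eq_lintegral_ofReal
      (integrableOn_Ioi_deriv_of_nonneg' hderiv hnonneg hlim)
      ((ae_restrict_iff' measurableSet_Ioi).2 (ae_of_all _ hnonneg)),
    integral_Ioi_of_hasDerivAt_of_nonneg' hderiv hnonneg hlim]
  simp

lemma lintegral_sq_le_measure_univ_mul {α : Type*} [MeasurableSpace α] {ν : Measure α}
    {φ : α → ℝ≥0∞} (hφ : AEMeasurable φ ν) :
    (∫⁻ x, φ x ∂ν) ^ 2 ≤ ν univ * ∫⁻ x, φ x ^ 2 ∂ν := by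
  have h := ENNReal.lintegral_mul_norm_pow_le (μ := ν) (f := fun _ => 1) (p := 1 / 2)
    (q := 1 / 2) aemeasurable_const (hφ.pow_const 2) (by norm_num) (by norm_num) (by norm_num)
  have hsqrt : ∀ z : ℝ≥0∞, (z ^ (1 / 2 : ℝ)) ^ 2 = z := fun z => by
    rw [← ENNReal.rpow_natCast, ← ENNReal.rpow_mul]; norm_num
  have hsqrt' : ∀ z : ℝ≥0∞, (z ^ 2) ^ (1 / 2 : ℝ) = z := fun z => by
    rw [← ENNReal.rpow_natCast, ← ENNReal.rpow_mul]; norm_num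
  simp only [ENNReal.one_rpow, one_mul, lintegral_const] at h
  calc (∫⁻ x, φ x ∂ν) ^ 2 = (∫⁻ x, (φ x ^ 2) ^ (1 / 2 : ℝ) ∂ν) ^ 2 := by simp_rw [hsqrt']
    _ ≤ ((ν univ) ^ (1 / 2 : ℝ) * (∫⁻ x, φ x ^ 2 ∂ν) ^ (1 / 2 : ℝ)) ^ 2 := by gcongr
    _ = ν univ * ∫⁻ x, φ x ^ 2 ∂ν := by rw [mul_pow, hsqrt, hsqrt]

lemma mul_div_sq_add_sq_eq_rpow {s : ℝ} (hs : 0 < s) (c t : ℝ) :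
    s * c / (s ^ 2 + t ^ 2) = s ^ (-(1 : ℝ) / 2) * c * (s ^ ((3 : ℝ) / 2) / (s ^ 2 + t ^ 2)) := by
  have h : s ^ (-(1 : ℝ) / 2) * s ^ ((3 : ℝ) / 2) = s := by
    rw [← rpow_add hs]; norm_num
  rw [mul_div_assoc', mul_right_comm, h, mul_comm s c, mul_comm c s]

lemma sq_mul_div_sq_add_sq_sq_le {s c : ℝ} (hs : 0 < s) (hc : 0 ≤ c) (t : ℝ) :
    t ^ 2 * (s * c / (s ^ 2 + t ^ 2) ^ 2) ≤ s * c / (s ^ 2 + t ^ 2) := by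
  have hD : 0 < s ^ 2 + t ^ 2 := by positivity
  have hX : 0 ≤ s * c / (s ^ 2 + t ^ 2) := by positivity
  rw [pow_two (s ^ 2 + t ^ 2), ← div_div, mul_div_assoc', mul_comm, div_le_iff₀ hD]
  nlinarith [mul_nonneg hX (sq_nonneg s)]

lemma rpow_three_halves_div_sq_le {s : ℝ} (hs : 0 < s) (t : ℝ) :
    (s ^ ((3 : ℝ) / 2) / (s ^ 2 + t ^ 2)) ^ 2 ≤ s / (s ^ 2 + t ^ 2) := by
  have hD : 0 < s ^ 2 + t ^ 2 := by positivity
  have h3 : (s ^ ((3 : ℝ) / 2)) ^ 2 = s ^ 3 := by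
    rw [← rpow_natCast, ← rpow_mul hs.le]; norm_num
  rw [div_pow, h3, div_le_div_iff₀ (by positivity) hD]
  nlinarith [mul_nonneg (mul_nonneg hs.le hD.le) (sq_nonneg t)]

lemma ofReal_integral_le_lintegral_withDensity {α : Type*} [MeasurableSpace α] {μ : Measure α}
    {w φ p : α → ℝ} (hw : Measurable w) (hφ : Measurable φ) (hw0 : ∀ᵐ x ∂μ, 0 ≤ w x)
    (hp : ∀ᵐ x ∂μ, |p x| ≤ w x * φ x) :
    ENNReal.ofReal (∫ x, p x ∂μ) ≤
      ∫⁻ x, ENNReal.ofReal (φ x) ∂μ.withDensity fun x => ENNReal.ofReal (w x) := by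
  rw [lintegral_withDensity_eq_lintegral_mul _ hw.ennreal_ofReal hφ.ennreal_ofReal]
  calc ENNReal.ofReal (∫ x, p x ∂μ) ≤ ‖∫ x, p x ∂μ‖ₑ := by
        rw [Real.enorm_eq_ofReal_abs]; exact ENNReal.ofReal_le_ofReal (le_abs_self _)
    _ ≤ ∫⁻ x, ‖p x‖ₑ ∂μ := enorm_integral_le_lintegral_enorm p
    _ ≤ _ := lintegral_mono_ae <| by
      filter_upwards [hw0, hp] with x hx0 hx
      rw [Pi.mul_apply, ← ENNReal.ofReal_mul hx0, Real.enorm_eq_ofReal_abs]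
      exact ENNReal.ofReal_le_ofReal hx

lemma lintegral_Ioi_lintegral_div_sq_add_sq {α : Type*} [MeasurableSpace α] {ν : Measure α}
    [SFinite ν] {ω : α → ℝ} (hω : Measurable ω) (hpos : ∀ᵐ x ∂ν, 0 < ω x) :
    ∫⁻ t in Ioi (0 : ℝ), ∫⁻ x, ENNReal.ofReal (ω x / (ω x ^ 2 + t ^ 2)) ∂ν =
      ENNReal.ofReal (π / 2) * ν univ := by
  rw [lintegral_lintegral_swap (by fun_prop), ← lintegral_const]
  exact lintegral_congr_ae (hpos.mono fun x hx => lintegral_Ioi_div_sq_add_sq hx)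

namespace RenormalizedTrace

variable {X : Type*} [MeasurableSpace X] {μ : Measure X} {ω : X → ℝ} {f : X → ℂ}

noncomputable def G₁ (μ : Measure X) (ω : X → ℝ) (f : X → ℂ) (t : ℝ) : ℝ :=
  ∫ x, ω x * ‖f x‖ ^ 2 / ((ω x) ^ 2 + t ^ 2) ∂μ

noncomputable def G₂ (μ : Measure X) (ω : X → ℝ) (f : X → ℂ) (t : ℝ) : ℝ :=
  ∫ x, ω x * ‖f x‖ ^ 2 / ((ω x) ^ 2 + t ^ 2) ^ 2 ∂μ

noncomputable def weightedMeasure (μ : Measure X) (ω : X → ℝ) (f : X → ℂ) : Measure X :=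
  μ.withDensity fun x => ENNReal.ofReal (ω x ^ (-(1 : ℝ) / 2) * ‖f x‖ ^ 2)

lemma ae_weightedMeasure {p : X → Prop} (h : ∀ᵐ x ∂μ, p x) :
    ∀ᵐ x ∂weightedMeasure μ ω f, p x :=
  (withDensity_absolutelyContinuous μ _).ae_le h

lemma G₁_nonneg (hpos : ∀ᵐ x ∂μ, 0 < ω x) (t : ℝ) : 0 ≤ G₁ μ ω f t :=
  integral_nonneg_of_ae (hpos.mono fun x hx => by positivity)

lemma G₂_nonneg (hpos : ∀ᵐ x ∂μ, 0 < ω x) (t : ℝ) : 0 ≤ G₂ μ ω f t :=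
  integral_nonneg_of_ae (hpos.mono fun x hx => by positivity)

lemma ofReal_G₁_le (hω : Measurable ω) (hf : Measurable f) (hpos : ∀ᵐ x ∂μ, 0 < ω x) (t : ℝ) :
    ENNReal.ofReal (G₁ μ ω f t) ≤
      ∫⁻ x, ENNReal.ofReal (ω x ^ ((3 : ℝ) / 2) / (ω x ^ 2 + t ^ 2)) ∂weightedMeasure μ ω f :=
  ofReal_integral_le_lintegral_withDensity (by fun_prop) (by fun_prop)
    (hpos.mono fun x hx => by positivity)
    (hpos.mono fun x hx => by
      rw [abs_of_nonneg (by positivity)]; exact (mul_div_sq_add_sq_eq_rpow hx _ t).le)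

lemma ofReal_sq_mul_G₂_le (hω : Measurable ω) (hf : Measurable f) (hpos : ∀ᵐ x ∂μ, 0 < ω x)
    (t : ℝ) :
    ENNReal.ofReal (t ^ 2 * G₂ μ ω f t) ≤
      ∫⁻ x, ENNReal.ofReal (ω x ^ ((3 : ℝ) / 2) / (ω x ^ 2 + t ^ 2)) ∂weightedMeasure μ ω f := by
  rw [G₂, ← integral_const_mul]
  exact ofReal_integral_le_lintegral_withDensity (by fun_prop) (by fun_prop)
    (hpos.mono fun x hx => by positivity)
    (hpos.mono fun x hx => by
      rw [abs_of_nonneg (by positivity)]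
      exact (sq_mul_div_sq_add_sq_sq_le hx (by positivity) t).trans
        (mul_div_sq_add_sq_eq_rpow hx _ t).le)

lemma ofReal_integrand_le (hω : Measurable ω) (hf : Measurable f) (hpos : ∀ᵐ x ∂μ, 0 < ω x)
    {lam : ℝ} (hlam : 0 ≤ lam) (t : ℝ) :
    ENNReal.ofReal (t ^ 2 * G₂ μ ω f t * G₁ μ ω f t / (1 + 4 * lam * G₁ μ ω f t)) ≤
      weightedMeasure μ ω f univ *
        ∫⁻ x, ENNReal.ofReal (ω x / (ω x ^ 2 + t ^ 2)) ∂weightedMeasure μ ω f := by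
  set ν := weightedMeasure μ ω f
  have hG₁ := G₁_nonneg (f := f) hpos t
  have hG₂ := G₂_nonneg (f := f) hpos t
  calc ENNReal.ofReal (t ^ 2 * G₂ μ ω f t * G₁ μ ω f t / (1 + 4 * lam * G₁ μ ω f t))
      ≤ ENNReal.ofReal (t ^ 2 * G₂ μ ω f t) * ENNReal.ofReal (G₁ μ ω f t) := by
        rw [← ENNReal.ofReal_mul (by positivity)]
        exact ENNReal.ofReal_le_ofReal (div_le_self (by positivity) (by nlinarith))
    _ ≤ (∫⁻ x, ENNReal.ofReal (ω x ^ ((3 : ℝ) / 2) / (ω x ^ 2 + t ^ 2)) ∂ν) ^ 2 :=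
        (mul_le_mul' (ofReal_sq_mul_G₂_le hω hf hpos t)
          (ofReal_G₁_le hω hf hpos t)).trans_eq (sq _).symm
    _ ≤ ν univ * ∫⁻ x, ENNReal.ofReal (ω x ^ ((3 : ℝ) / 2) / (ω x ^ 2 + t ^ 2)) ^ 2 ∂ν :=
        lintegral_sq_le_measure_univ_mul (by fun_prop)
    _ ≤ ν univ * ∫⁻ x, ENNReal.ofReal (ω x / (ω x ^ 2 + t ^ 2)) ∂ν := by
        gcongr ν univ * ?_
        refine lintegral_mono_ae ((ae_weightedMeasure hpos).mono fun x hx => ?_)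
        rw [← ENNReal.ofReal_pow (by positivity)]
        exact ENNReal.ofReal_le_ofReal (rpow_three_halves_div_sq_le hx t)

lemma weightedMeasure_univ (hω : Measurable ω) (hf : Measurable f) (hpos : ∀ᵐ x ∂μ, 0 < ω x)
    (hint : ∫⁻ x, ENNReal.ofReal (ω x ^ (-(1:ℝ)/2) * ‖f x‖ ^ 2) ∂μ < ⊤) :
    weightedMeasure μ ω f univ = ENNReal.ofReal (∫ x, ω x ^ (-(1:ℝ)/2) * ‖f x‖ ^ 2 ∂μ) := by
  rw [weightedMeasure, withDensity_apply _ MeasurableSet.univ, setLIntegral_univ,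
    integral_eq_lintegral_of_nonneg_ae (hpos.mono fun x hx => by positivity) (by fun_prop),
    ENNReal.ofReal_toReal hint.ne]

end RenormalizedTrace

/-- Finiteness of the renormalized trace (up to the prefactor `−32λ²/π`): with
`G₁(t) = ∫ ω|f|²/(ω²+t²) dμ` and `G₂(t) = ∫ ω|f|²/(ω²+t²)² dμ`, if `ω ≥ 1` a.e. and
`∫ ω^{-1/2}|f|² dμ < ∞`, then
`∫₀^∞ t² G₂(t) G₁(t)/(1 + 4λG₁(t)) dt ≤ (π/√2) (∫ ω^{-1/2}|f|² dμ)²`. -/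
theorem renormalized_trace_finite
    {X : Type*} [MeasurableSpace X] (μ : Measure X)
    (ω : X → ℝ) (hω : Measurable ω) (hω1 : ∀ᵐ x ∂μ, 1 ≤ ω x)
    (f : X → ℂ) (hf : Measurable f)
    (hint : ∫⁻ x, ENNReal.ofReal (ω x ^ (-(1:ℝ)/2) * ‖f x‖ ^ 2) ∂μ < ⊤)
    (lam : ℝ) (hlam : 0 ≤ lam) :
    ∫⁻ t in Set.Ioi (0:ℝ), ENNReal.ofReal
        (t ^ 2 * (∫ x, ω x * ‖f x‖ ^ 2 / ((ω x) ^ 2 + t ^ 2) ^ 2 ∂μ) *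
          (∫ x, ω x * ‖f x‖ ^ 2 / ((ω x) ^ 2 + t ^ 2) ∂μ) /
          (1 + 4 * lam * ∫ x, ω x * ‖f x‖ ^ 2 / ((ω x) ^ 2 + t ^ 2) ∂μ)) ≤
      ENNReal.ofReal
        ((Real.pi / Real.sqrt 2) * (∫ x, ω x ^ (-(1:ℝ)/2) * ‖f x‖ ^ 2 ∂μ) ^ 2) := by
  have hpos : ∀ᵐ x ∂μ, 0 < ω x := hω1.mono fun x hx => by linarith
  set ν := RenormalizedTrace.weightedMeasure μ ω f
  set I := ∫ x, ω x ^ (-(1:ℝ)/2) * ‖f x‖ ^ 2 ∂μ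
  have hI : 0 ≤ I := integral_nonneg_of_ae (hpos.mono fun x hx => by positivity)
  have hν : ν univ = ENNReal.ofReal I := RenormalizedTrace.weightedMeasure_univ hω hf hpos hint
  have : IsFiniteMeasure ν := ⟨hν ▸ ENNReal.ofReal_lt_top⟩
  have hπ : π / 2 ≤ π / √2 := by
    gcongr
    exact sqrt_le_iff.mpr ⟨by norm_num, by norm_num⟩
  calc _ ≤ ∫⁻ t in Ioi (0 : ℝ), ν univ * ∫⁻ x, ENNReal.ofReal (ω x / (ω x ^ 2 + t ^ 2)) ∂ν :=
        lintegral_mono fun t => RenormalizedTrace.ofReal_integrand_le hω hf hpos hlam t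
    _ = ν univ * (ENNReal.ofReal (π / 2) * ν univ) := by
        rw [lintegral_const_mul' _ _ (measure_ne_top ν univ),
          lintegral_Ioi_lintegral_div_sq_add_sq hω (RenormalizedTrace.ae_weightedMeasure hpos)]
    _ = ENNReal.ofReal (π / 2 * I ^ 2) := by
        rw [hν, ← ENNReal.ofReal_mul (by positivity), ← ENNReal.ofReal_mul hI]
        ring_nf
    _ ≤ _ := ENNReal.ofReal_le_ofReal (by gcongr)
end

section
/- Let (X, μ) be a measure space, ω : X → ℝ measurable with ω(x) ≥ 1 for μ-a.e. x, and f : X → ℂ measurable with ∫_X |f|² dμ < ∞ and ∫_X (2 + ln ω)⁴|f|² dμ < ∞. Then ∫₀^∞ t² · (∫_X ω²|f|²/(ω² + t²)² dμ)^{1/2} · (∫_X |f|²/(ω² + t²)² dμ)^{1/2} dt < ∞. -/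
/-!
Write `F = |f|²`, `A = ∫ F` and `B = ∫ (2 + ln ω)⁴ F`. Since `(ω² + t²)² ≥ t⁴`, the second inner
integral is at most `A / t⁴`, so the outer integrand is at most `√A · √a(t)` with
`a(t) = ∫ ω² F / (ω² + t²)²`. As `ω ≥ 1`, `a(t) ≤ A`, which settles `t ≤ 1`. For `t ≥ 1`,
`ω² / (ω² + t²)² ≤ (2 + ln ω)⁴ / ρ(t)²` with `ρ(t) = t (2 + ½ ln t)²`: if `ω² ≤ t` the left side is
at most `t⁻³` and `(2 + ½ ln t)⁴ ≤ 16 t ≤ (2 + ln ω)⁴ t`; if `ω² > t` it is at most `t⁻²` and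
`2 + ½ ln t ≤ 2 + ln ω`. Hence `a(t) ≤ B / ρ(t)²`, and `1 / ρ` is integrable on `(1, ∞)`, with
primitive `-4 / (4 + ln t)`.
-/

open MeasureTheory Set Real Filter

section PointwiseBounds

variable {w t F : ℝ}

lemma two_add_half_log_pow_four_le (ht : 0 < t) (hlog : -log t ≤ 4) :
    (2 + 2⁻¹ * log t) ^ 4 ≤ 16 * t := by
  have h := one_sub_div_pow_le_exp_neg (n := 4) (t := -log t) (by exact_mod_cast hlog)
  rw [neg_neg, exp_log ht] at h
  calc (2 + 2⁻¹ * log t) ^ 4 = 16 * (1 - -log t / (4 : ℕ)) ^ 4 := by push_cast; ring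
    _ ≤ 16 * t := by gcongr

lemma sq_div_sq_add_sq_sq_le_log (hw : 1 ≤ w) (ht : 1 ≤ t) :
    w ^ 2 / (w ^ 2 + t ^ 2) ^ 2 ≤ (2 + log w) ^ 4 / (t * (2 + 2⁻¹ * log t) ^ 2) ^ 2 := by
  have hlogt := log_nonneg ht
  have hlogw := log_nonneg hw
  have ht₀ : 0 < t := by linarith
  rcases le_or_gt (w ^ 2) t with hwt | hwt
  · have h16 : (2 : ℝ) ^ 4 ≤ (2 + log w) ^ 4 := by gcongr; linarith
    calc w ^ 2 / (w ^ 2 + t ^ 2) ^ 2 ≤ t / (t ^ 2) ^ 2 := by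
          gcongr; nlinarith
      _ = 2 ^ 4 / (16 * t) / t ^ 2 := by field_simp; norm_num
      _ ≤ 2 ^ 4 / (2 + 2⁻¹ * log t) ^ 4 / t ^ 2 := by
          gcongr
          exact two_add_half_log_pow_four_le ht₀ (by linarith)
      _ ≤ (2 + log w) ^ 4 / (2 + 2⁻¹ * log t) ^ 4 / t ^ 2 := by gcongr
      _ = (2 + log w) ^ 4 / (t * (2 + 2⁻¹ * log t) ^ 2) ^ 2 := by field_simp
  · have hlog : 2⁻¹ * log t ≤ log w := by
      have := log_le_log ht₀ hwt.le
      rw [log_pow] at this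
      push_cast at this
      linarith
    calc w ^ 2 / (w ^ 2 + t ^ 2) ^ 2 ≤ 1 / t ^ 2 := by
          rw [div_le_div_iff₀ (by positivity) (by positivity)]
          nlinarith [sq_nonneg (w ^ 2 - t ^ 2), mul_nonneg (sq_nonneg w) (sq_nonneg t)]
      _ = (2 + 2⁻¹ * log t) ^ 4 / (t * (2 + 2⁻¹ * log t) ^ 2) ^ 2 := by
          field_simp
      _ ≤ (2 + log w) ^ 4 / (t * (2 + 2⁻¹ * log t) ^ 2) ^ 2 := by
          gcongr

lemma sq_mul_div_sq_add_sq_sq_le_log (hw : 1 ≤ w) (ht : 1 ≤ t) (hF : 0 ≤ F) :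
    w ^ 2 * F / (w ^ 2 + t ^ 2) ^ 2
      ≤ (2 + log w) ^ 4 * F / (t * (2 + 2⁻¹ * log t) ^ 2) ^ 2 := by
  rw [mul_div_right_comm, mul_div_right_comm ((2 + log w) ^ 4)]
  exact mul_le_mul_of_nonneg_right (sq_div_sq_add_sq_sq_le_log hw ht) hF

lemma sq_mul_div_sq_add_sq_sq_le_s14 (hw : 1 ≤ w) (hF : 0 ≤ F) :
    w ^ 2 * F / (w ^ 2 + t ^ 2) ^ 2 ≤ F := by
  rw [div_le_iff₀ (by positivity)]
  have hw2 : 1 ≤ w ^ 2 := one_le_pow₀ hw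
  have : w ^ 2 ≤ (w ^ 2 + t ^ 2) ^ 2 := by nlinarith [sq_nonneg t]
  nlinarith

lemma div_sq_add_sq_sq_le (ht : t ≠ 0) (hF : 0 ≤ F) :
    F / (w ^ 2 + t ^ 2) ^ 2 ≤ F / t ^ 4 := by
  apply div_le_div_of_nonneg_left hF (by positivity)
  nlinarith [sq_nonneg w, sq_nonneg t, mul_nonneg (sq_nonneg w) (sq_nonneg t)]

end PointwiseBounds

lemma integrableOn_Ioi_one_inv_mul_add_mul_log_sq {c d : ℝ} (hc : 0 < c) (hd : 0 < d) :
    IntegrableOn (fun t => (t * (c + d * log t) ^ 2)⁻¹) (Ioi 1) := by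
  have hpos : ∀ t ∈ Ici (1 : ℝ), 0 < c + d * log t := fun t ht => by
    have := log_nonneg ht
    positivity
  refine integrableOn_Ioi_deriv_of_nonneg' (g := fun t => -(d * (c + d * log t))⁻¹) (l := 0)
    (fun t ht => ?_) (fun t ht => ?_) ?_
  · have h := ((((hasDerivAt_log (zero_lt_one.trans_le ht).ne').const_mul d).const_add
      c).const_mul d).inv (mul_ne_zero hd.ne' (hpos t ht).ne')
    refine h.neg.congr_deriv ?_
    field_simp
  · exact inv_nonneg.2 (mul_nonneg (zero_lt_one.trans ht).le (sq_nonneg _))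
  · have h := (tendsto_atTop_add_const_left _ c
      (tendsto_log_atTop.const_mul_atTop hd)).const_mul_atTop hd
    simpa using h.inv_tendsto_atTop.neg

lemma setLIntegral_ofReal_lt_top_of_le {α : Type*} [MeasurableSpace α] {μ : Measure α}
    {s : Set α} (hs : MeasurableSet s) {h g : α → ℝ} (hle : ∀ x ∈ s, h x ≤ g x)
    (hg : IntegrableOn g s μ) : ∫⁻ x in s, ENNReal.ofReal (h x) ∂μ < ⊤ :=
  (setLIntegral_mono' hs fun x hx => ENNReal.ofReal_le_ofReal (hle x hx)).trans_lt
    hg.lintegral_lt_top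

lemma setLIntegral_Ioi_sq_mul_sqrt_mul_sqrt_lt_top {a b ρ : ℝ → ℝ} {A B : ℝ}
    (hb : ∀ t > 0, b t ≤ A / t ^ 4) (ha₀ : ∀ t ∈ Ioc 0 1, a t ≤ A)
    (ha₁ : ∀ t > 1, a t ≤ B / ρ t ^ 2) (hρ : ∀ t > 1, 0 ≤ ρ t)
    (hρi : IntegrableOn (fun t => (ρ t)⁻¹) (Ioi 1)) :
    ∫⁻ t in Ioi 0, ENNReal.ofReal (t ^ 2 * √(a t) * √(b t)) < ⊤ := by
  have key : ∀ t > 0, t ^ 2 * √(a t) * √(b t) ≤ √A * √(a t) := fun t ht => calc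
    t ^ 2 * √(a t) * √(b t) ≤ t ^ 2 * √(a t) * √(A / (t ^ 2) ^ 2) := by
        rw [← pow_mul]
        gcongr
        exact hb t ht
    _ = √A * √(a t) := by
        rw [sqrt_div' _ (by positivity), sqrt_sq (by positivity)]
        field_simp
  rw [← Ioc_union_Ioi_eq_Ioi zero_le_one]
  refine (lintegral_union_le _ _ _).trans_lt (ENNReal.add_lt_top.2 ⟨?_, ?_⟩)
  · refine setLIntegral_ofReal_lt_top_of_le measurableSet_Ioc (g := fun _ => √A * √A)
      (fun t ht => (key t ht.1).trans ?_) (integrableOn_const (by simp))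
    gcongr
    exact ha₀ t ht
  · refine setLIntegral_ofReal_lt_top_of_le measurableSet_Ioi (fun t ht => ?_)
      (hρi.const_mul (√A * √B))
    calc _ ≤ √A * √(a t) := key t (zero_lt_one.trans ht)
      _ ≤ √A * √(B / ρ t ^ 2) := by gcongr; exact ha₁ t ht
      _ = √A * √B * (ρ t)⁻¹ := by
        rw [sqrt_div' _ (by positivity), sqrt_sq (hρ t ht)]
        ring

lemma integral_le_div_of_ae_le {X : Type*} [MeasurableSpace X] {μ : Measure X} {g G : X → ℝ}
    (c : ℝ) (hg : 0 ≤ᵐ[μ] g) (hG : Integrable G μ) (h : ∀ᵐ x ∂μ, g x ≤ G x / c) :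
    ∫ x, g x ∂μ ≤ (∫ x, G x ∂μ) / c :=
  (integral_mono_of_nonneg hg (hG.div_const c) h).trans_eq (integral_div c G)

/-- Finiteness of `∫₀^∞ t² ‖ω(ω²+t²)⁻¹f‖ ‖(ω²+t²)⁻¹f‖ dt` under the logarithmic
regularity assumption `∫ (2 + ln ω)⁴|f|² dμ < ∞` (i.e. `ln(ω)²f ∈ L²`). -/
theorem log_regularity_integral_finite
    {X : Type*} [MeasurableSpace X] (μ : Measure X)
    (ω : X → ℝ) (hω : Measurable ω) (hω1 : ∀ᵐ x ∂μ, 1 ≤ ω x)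
    (f : X → ℂ) (hf : Measurable f)
    (h1 : ∫⁻ x, ENNReal.ofReal (‖f x‖ ^ 2) ∂μ < ⊤)
    (h2 : ∫⁻ x, ENNReal.ofReal ((2 + Real.log (ω x)) ^ 4 * ‖f x‖ ^ 2) ∂μ < ⊤) :
    ∫⁻ t in Set.Ioi (0:ℝ), ENNReal.ofReal
        (t ^ 2 * Real.sqrt (∫ x, (ω x) ^ 2 * ‖f x‖ ^ 2 / ((ω x) ^ 2 + t ^ 2) ^ 2 ∂μ) *
          Real.sqrt (∫ x, ‖f x‖ ^ 2 / ((ω x) ^ 2 + t ^ 2) ^ 2 ∂μ)) < ⊤ := by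
  have hF : Integrable (fun x => ‖f x‖ ^ 2) μ :=
    (lintegral_ofReal_ne_top_iff_integrable (hf.norm.pow_const 2).aestronglyMeasurable
      (ae_of_all _ fun _ => by positivity)).1 h1.ne
  have hG : Integrable (fun x => (2 + log (ω x)) ^ 4 * ‖f x‖ ^ 2) μ :=
    (lintegral_ofReal_ne_top_iff_integrable
      (((hω.log.const_add 2).pow_const 4).mul (hf.norm.pow_const 2)).aestronglyMeasurable
      (ae_of_all _ fun x => by dsimp; positivity)).1 h2.ne
  refine setLIntegral_Ioi_sq_mul_sqrt_mul_sqrt_lt_top (A := ∫ x, ‖f x‖ ^ 2 ∂μ)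
    (B := ∫ x, (2 + log (ω x)) ^ 4 * ‖f x‖ ^ 2 ∂μ) (ρ := fun t => t * (2 + 2⁻¹ * log t) ^ 2)
    (fun t ht => ?_) (fun t ht => ?_) (fun t ht => ?_)
    (fun t ht => mul_nonneg (zero_le_one.trans ht.le) (sq_nonneg _))
    (integrableOn_Ioi_one_inv_mul_add_mul_log_sq two_pos (by norm_num))
  · exact integral_le_div_of_ae_le _ (ae_of_all _ fun x => by positivity) hF
      (ae_of_all _ fun x => div_sq_add_sq_sq_le ht.ne' (sq_nonneg _))
  · exact integral_mono_of_nonneg (ae_of_all _ fun x => by positivity) hF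
      (hω1.mono fun x hx => sq_mul_div_sq_add_sq_sq_le_s14 hx (sq_nonneg _))
  · exact integral_le_div_of_ae_le _ (ae_of_all _ fun x => by positivity) hG
      (hω1.mono fun x hx => sq_mul_div_sq_add_sq_sq_le_log hx ht.le (sq_nonneg _))
end

section
/- Let α ∈ (0, 1/2) and set C₀ = ∫₀^∞ p^{2α−1}/(1 + p²) dp (a finite positive real number). Then for every t ≥ 1, the function k ↦ k^{2α−1}/(k² + t²) is Lebesgue integrable on (1, ∞) and | ∫₁^∞ k^{2α−1}/(k² + t²) dk − C₀ t^{2α−2} | ≤ t^{−2}/(2α). -/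
/-!
Substituting `k = t p` gives `∫₁^∞ k^{2α-1}/(k²+t²) dk = t^{2α-2} ∫_{1/t}^∞ p^{2α-1}/(1+p²) dp`,
so the error is `t^{2α-2}` times the missing piece `∫₀^{1/t} p^{2α-1}/(1+p²) dp`. Bounding the
integrand there by `p^{2α-1}` makes that piece at most `t^{-2α}/(2α)`.
-/

open MeasureTheory Set Real

section RpowDivSqAdd

variable {s : ℝ}

theorem integrableOn_Ioi_rpow_div_sq_add_sq (hs : s < 1) {a : ℝ} (ha : 0 < a) (c : ℝ) :
    IntegrableOn (fun k : ℝ => k ^ s / (k ^ 2 + c ^ 2)) (Ioi a) := by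
  refine (integrableOn_Ioi_rpow_of_lt (by linarith : s - 2 < -1) ha).mono'
    (by fun_prop : Measurable _).aestronglyMeasurable ?_
  filter_upwards [ae_restrict_mem measurableSet_Ioi] with k hk
  have hk0 : 0 < k := ha.trans hk
  rw [norm_of_nonneg (by positivity), rpow_sub hk0, rpow_two]
  gcongr
  exact le_add_of_nonneg_right (sq_nonneg c)

theorem rpow_div_one_add_sq_le_rpow {p : ℝ} (hp : 0 ≤ p) : p ^ s / (1 + p ^ 2) ≤ p ^ s :=
  div_le_self (rpow_nonneg hp s) (le_add_of_nonneg_right (sq_nonneg p))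

theorem intervalIntegrable_rpow_div_one_add_sq (hs : -1 < s) (b : ℝ) :
    IntervalIntegrable (fun p : ℝ => p ^ s / (1 + p ^ 2)) volume 0 b := by
  refine (intervalIntegral.intervalIntegrable_rpow' hs).norm.mono_fun'
    (by fun_prop : Measurable _).aestronglyMeasurable (ae_of_all _ fun p => ?_)
  simp only [norm_div, norm_of_nonneg (by positivity : (0 : ℝ) ≤ 1 + p ^ 2)]
  exact div_le_self (norm_nonneg _) (le_add_of_nonneg_right (sq_nonneg p))

theorem integrableOn_Ioi_zero_rpow_div_one_add_sq (hs₁ : -1 < s) (hs₂ : s < 1) :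
    IntegrableOn (fun p : ℝ => p ^ s / (1 + p ^ 2)) (Ioi 0) := by
  rw [← Ioc_union_Ioi_eq_Ioi zero_le_one, integrableOn_union]
  exact ⟨(intervalIntegrable_rpow_div_one_add_sq hs₁ 1).1,
    by simpa [add_comm] using integrableOn_Ioi_rpow_div_sq_add_sq hs₂ one_pos 1⟩

theorem setIntegral_Ioi_zero_rpow_div_one_add_sq_pos (hs₁ : -1 < s) (hs₂ : s < 1) :
    0 < ∫ p in Ioi (0 : ℝ), p ^ s / (1 + p ^ 2) := by
  have hpos : ∀ p ∈ Ioi (0 : ℝ), 0 < p ^ s / (1 + p ^ 2) := fun p hp => by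
    have : 0 < p := hp
    positivity
  rw [setIntegral_pos_iff_support_of_nonneg_ae
    ((ae_restrict_iff' measurableSet_Ioi).2 (ae_of_all _ fun p hp => (hpos p hp).le))
    (integrableOn_Ioi_zero_rpow_div_one_add_sq hs₁ hs₂),
    inter_eq_right.2 fun p hp => Function.mem_support.2 (hpos p hp).ne']
  simp

theorem setIntegral_Ioi_rpow_div_sq_add_sq_eq {t : ℝ} (ht : 0 < t) {a : ℝ} (ha : 0 ≤ a) :
    ∫ k in Ioi a, k ^ s / (k ^ 2 + t ^ 2) =
      t ^ (s - 1) * ∫ p in Ioi (a / t), p ^ s / (1 + p ^ 2) := by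
  have hscale : ∀ p ∈ Ioi (a / t),
      (t * p) ^ s / ((t * p) ^ 2 + t ^ 2) = t ^ (s - 2) * (p ^ s / (1 + p ^ 2)) := by
    intro p hp
    have hp : 0 ≤ p := (div_nonneg ha ht.le).trans hp.le
    rw [mul_rpow ht.le hp, rpow_sub ht, rpow_two]
    field_simp
    ring
  have hsub := integral_comp_mul_left_Ioi (fun k => k ^ s / (k ^ 2 + t ^ 2)) (a / t) ht
  rw [mul_div_cancel₀ a ht.ne', setIntegral_congr_fun measurableSet_Ioi hscale,
    integral_const_mul, smul_eq_mul] at hsub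
  rw [eq_inv_mul_iff_mul_eq₀ ht.ne'] at hsub
  rw [← hsub, rpow_sub ht, rpow_sub ht, rpow_one, rpow_two]
  field_simp

theorem intervalIntegral_rpow_div_one_add_sq_le (hs : -1 < s) {b : ℝ} (hb : 0 ≤ b) :
    ∫ p in 0..b, p ^ s / (1 + p ^ 2) ≤ b ^ (s + 1) / (s + 1) := by
  calc ∫ p in 0..b, p ^ s / (1 + p ^ 2)
      ≤ ∫ p in 0..b, p ^ s :=
        intervalIntegral.integral_mono_on hb (intervalIntegrable_rpow_div_one_add_sq hs b)
          (intervalIntegral.intervalIntegrable_rpow' hs) fun p hp => rpow_div_one_add_sq_le_rpow hp.1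
    _ = b ^ (s + 1) / (s + 1) := by
        rw [integral_rpow (Or.inl hs), zero_rpow (by linarith), sub_zero]

theorem intervalIntegral_rpow_div_one_add_sq_nonneg {b : ℝ} (hb : 0 ≤ b) :
    0 ≤ ∫ p in 0..b, p ^ s / (1 + p ^ 2) :=
  intervalIntegral.integral_nonneg hb fun p hp => div_nonneg (rpow_nonneg hp.1 s) (by positivity)

theorem setIntegral_Ioi_one_rpow_div_sq_add_sq_sub (hs₁ : -1 < s) (hs₂ : s < 1) {t : ℝ}
    (ht : 0 < t) :
    (∫ k in Ioi (1 : ℝ), k ^ s / (k ^ 2 + t ^ 2)) -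
        t ^ (s - 1) * ∫ p in Ioi (0 : ℝ), p ^ s / (1 + p ^ 2) =
      -(t ^ (s - 1) * ∫ p in 0..1 / t, p ^ s / (1 + p ^ 2)) := by
  rw [setIntegral_Ioi_rpow_div_sq_add_sq_eq ht zero_le_one, ← intervalIntegral.integral_Ioi_sub_Ioi
    (integrableOn_Ioi_zero_rpow_div_one_add_sq hs₁ hs₂) (by positivity : (0 : ℝ) ≤ 1 / t)]
  ring

end RpowDivSqAdd

/-- Asymptotic estimate (equation (124)): for `α ∈ (0, 1/2)` and
`C₀ = ∫₀^∞ p^{2α−1}/(1+p²) dp`, the function `k ↦ k^{2α−1}/(k²+t²)` is integrable on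
`(1,∞)` for each `t ≥ 1`, `C₀` is finite and positive, and
`|∫₁^∞ k^{2α−1}/(k²+t²) dk − C₀ t^{2α−2}| ≤ t^{−2}/(2α)`. -/
theorem resolvent_denominator_asymptotics
    (α : ℝ) (hα : α ∈ Set.Ioo (0:ℝ) (1/2))
    (C₀ : ℝ) (hC₀ : C₀ = ∫ p in Set.Ioi (0:ℝ), p ^ (2 * α - 1) / (1 + p ^ 2)) :
    IntegrableOn (fun p : ℝ => p ^ (2 * α - 1) / (1 + p ^ 2)) (Set.Ioi 0) ∧
    0 < C₀ ∧
    ∀ t : ℝ, 1 ≤ t →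
      IntegrableOn (fun k : ℝ => k ^ (2 * α - 1) / (k ^ 2 + t ^ 2)) (Set.Ioi 1) ∧
      |(∫ k in Set.Ioi (1:ℝ), k ^ (2 * α - 1) / (k ^ 2 + t ^ 2)) - C₀ * t ^ (2 * α - 2)| ≤
        t ^ (-(2:ℝ)) / (2 * α) := by
  obtain ⟨hα₀, hα₁⟩ := hα
  have hs₁ : -1 < 2 * α - 1 := by linarith
  have hs₂ : 2 * α - 1 < 1 := by linarith
  refine ⟨integrableOn_Ioi_zero_rpow_div_one_add_sq hs₁ hs₂, hC₀ ▸ setIntegral_Ioi_zero_rpow_div_one_add_sq_pos hs₁ hs₂, fun t ht => ?_⟩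
  have ht₀ : 0 < t := one_pos.trans_le ht
  refine ⟨integrableOn_Ioi_rpow_div_sq_add_sq hs₂ one_pos t, ?_⟩
  rw [mul_comm C₀, hC₀, show 2 * α - 2 = 2 * α - 1 - 1 by ring,
    setIntegral_Ioi_one_rpow_div_sq_add_sq_sub hs₁ hs₂ ht₀, abs_neg,
    abs_of_nonneg (mul_nonneg (rpow_nonneg ht₀.le _)
      (intervalIntegral_rpow_div_one_add_sq_nonneg (by positivity)))]
  calc t ^ (2 * α - 1 - 1) * ∫ p in 0..1 / t, p ^ (2 * α - 1) / (1 + p ^ 2)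
      ≤ t ^ (2 * α - 1 - 1) * ((1 / t) ^ (2 * α - 1 + 1) / (2 * α - 1 + 1)) := by
        gcongr
        exact intervalIntegral_rpow_div_one_add_sq_le hs₁ (by positivity)
    _ = t ^ (-(2:ℝ)) / (2 * α) := by
        rw [sub_add_cancel, one_div, inv_rpow ht₀.le, ← rpow_neg ht₀.le, mul_div_assoc',
          ← rpow_add ht₀]
        ring_nf
end

section
/- Let α ∈ (0, 1/2) and c > 0. For t > 0 define g(t) = ∫₁^∞ k^{2α−1}/(k² + t²) dk and u(t) = (1 + c·t²·g(t))⁻¹ · ∫₁^∞ k^{2α}(k² − t²)/(k² + t²)² dk (both inner integrals being finite Lebesgue integrals since 2α − 2 < −1). Then u is Lebesgue integrable on (0, T) for every T > 0, and ∫₀^τ u(t) dt → +∞ as τ → +∞. -/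
/-!
Integrating by parts against `k ^ (2α+1) / (k² + t²)` turns the numerator of `u` into
`2α ∫₁^∞ k^{2α}/(k²+t²) dk + 1/(1+t²)`, which for `t ≥ 1` is at least a multiple of `t^{2α-1}`
(integrate only over `k ≥ t`). Splitting `g` at `k = t` gives `g(t) = O(t^{2α-2})`, so the
denominator is `O(t^{2α})` and `u(t) ≥ K/t` for `t ≥ 1`: the integral of `u` grows like `K log τ`.
Both inner integrals are dominated by `k^{2α-2}` uniformly in `t`, so `u` is continuous.
-/

open MeasureTheory Set Filter Topology

lemma integrableOn_Ioi_one_of_norm_le_rpow {f : ℝ → ℝ} {p : ℝ} (hp : p < -1)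
    (hf : AEStronglyMeasurable f (volume.restrict (Ioi 1)))
    (hbound : ∀ k, 1 < k → ‖f k‖ ≤ k ^ p) : IntegrableOn f (Ioi 1) :=
  (integrableOn_Ioi_rpow_of_lt hp one_pos).mono' hf <|
    (ae_restrict_mem measurableSet_Ioi).mono hbound

lemma continuous_integral_Ioi_one_of_norm_le_rpow {F : ℝ → ℝ → ℝ} {p : ℝ} (hp : p < -1)
    (hF : ∀ t, AEStronglyMeasurable (F t) (volume.restrict (Ioi 1)))
    (hbound : ∀ t k, 1 < k → ‖F t k‖ ≤ k ^ p) (hcont : ∀ k, 1 < k → Continuous (F · k)) :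
    Continuous fun t => ∫ k in Ioi 1, F t k :=
  continuous_of_dominated hF (fun t => (ae_restrict_mem measurableSet_Ioi).mono (hbound t))
    (integrableOn_Ioi_rpow_of_lt hp one_pos) ((ae_restrict_mem measurableSet_Ioi).mono hcont)

section

variable {s t k : ℝ}

lemma rpow_div_sq_add_sq_le (hk : 0 < k) : k ^ s / (k ^ 2 + t ^ 2) ≤ k ^ (s - 2) := by
  rw [Real.rpow_sub hk, Real.rpow_two]
  gcongr
  nlinarith

lemma norm_rpow_div_sq_add_sq_le (hk : 0 < k) : ‖k ^ s / (k ^ 2 + t ^ 2)‖ ≤ k ^ (s - 2) := by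
  rw [Real.norm_of_nonneg (by positivity)]
  exact rpow_div_sq_add_sq_le hk

lemma norm_rpow_mul_sub_div_sq_le (hk : 0 < k) :
    ‖k ^ s * (k ^ 2 - t ^ 2) / (k ^ 2 + t ^ 2) ^ 2‖ ≤ k ^ (s - 2) := by
  have hsum : 0 < k ^ 2 + t ^ 2 := by positivity
  have hdiff : |k ^ 2 - t ^ 2| ≤ k ^ 2 + t ^ 2 := abs_le.2 ⟨by nlinarith, by nlinarith⟩
  calc ‖k ^ s * (k ^ 2 - t ^ 2) / (k ^ 2 + t ^ 2) ^ 2‖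
      = k ^ s * |k ^ 2 - t ^ 2| / (k ^ 2 + t ^ 2) ^ 2 := by
        rw [Real.norm_eq_abs, abs_div, abs_mul, abs_of_pos (by positivity : 0 < k ^ s),
          abs_of_pos (by positivity : 0 < (k ^ 2 + t ^ 2) ^ 2)]
    _ ≤ k ^ s * (k ^ 2 + t ^ 2) / (k ^ 2 + t ^ 2) ^ 2 := by gcongr
    _ = k ^ s / (k ^ 2 + t ^ 2) := by field_simp
    _ ≤ k ^ (s - 2) := rpow_div_sq_add_sq_le hk

end

section

variable {s : ℝ}

lemma integrableOn_rpow_div_sq_add_sq (hs : s < 1) (t : ℝ) :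
    IntegrableOn (fun k : ℝ => k ^ s / (k ^ 2 + t ^ 2)) (Ioi 1) :=
  integrableOn_Ioi_one_of_norm_le_rpow (by linarith)
    (by fun_prop : Measurable _).aestronglyMeasurable
    fun _ hk => norm_rpow_div_sq_add_sq_le (one_pos.trans hk)

lemma integrableOn_rpow_mul_sub_div_sq (hs : s < 1) (t : ℝ) :
    IntegrableOn (fun k : ℝ => k ^ s * (k ^ 2 - t ^ 2) / (k ^ 2 + t ^ 2) ^ 2) (Ioi 1) :=
  integrableOn_Ioi_one_of_norm_le_rpow (by linarith)
    (by fun_prop : Measurable _).aestronglyMeasurable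
    fun _ hk => norm_rpow_mul_sub_div_sq_le (one_pos.trans hk)

lemma continuous_integral_rpow_div_sq_add_sq (hs : s < 1) :
    Continuous fun t : ℝ => ∫ k in Ioi (1 : ℝ), k ^ s / (k ^ 2 + t ^ 2) :=
  continuous_integral_Ioi_one_of_norm_le_rpow (by linarith)
    (fun _ => (by fun_prop : Measurable _).aestronglyMeasurable)
    (fun _ _ hk => norm_rpow_div_sq_add_sq_le (one_pos.trans hk))
    fun k hk => continuous_const.div (by fun_prop) fun t => by
      have : 0 < k := one_pos.trans hk; positivity

lemma continuous_integral_rpow_mul_sub_div_sq (hs : s < 1) :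
    Continuous fun t : ℝ => ∫ k in Ioi (1 : ℝ), k ^ s * (k ^ 2 - t ^ 2) / (k ^ 2 + t ^ 2) ^ 2 :=
  continuous_integral_Ioi_one_of_norm_le_rpow (by linarith)
    (fun _ => (by fun_prop : Measurable _).aestronglyMeasurable)
    (fun _ _ hk => norm_rpow_mul_sub_div_sq_le (one_pos.trans hk))
    fun k hk => (by fun_prop : Continuous _).div (by fun_prop) fun t => by
      have : 0 < k := one_pos.trans hk; positivity

lemma integral_rpow_div_sq_add_sq_nonneg (s t : ℝ) :
    0 ≤ ∫ k in Ioi (1 : ℝ), k ^ s / (k ^ 2 + t ^ 2) :=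
  setIntegral_nonneg measurableSet_Ioi fun k hk => by
    have : 0 < k := one_pos.trans hk; positivity

lemma tendsto_rpow_add_one_div_sq_add_sq (hs : s < 1) (t : ℝ) :
    Tendsto (fun k : ℝ => k ^ (s + 1) / (k ^ 2 + t ^ 2)) atTop (𝓝 0) := by
  have hdecay : Tendsto (fun k : ℝ => k ^ (s - 1)) atTop (𝓝 0) := by
    simpa using tendsto_rpow_neg_atTop (y := 1 - s) (by linarith)
  refine squeeze_zero' ?_ ?_ hdecay <;> filter_upwards [eventually_gt_atTop 0] with k hk
  · positivity
  · simpa [show s + 1 - 2 = s - 1 by ring] using rpow_div_sq_add_sq_le (s := s + 1) (t := t) hk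

/-- Integration by parts against `k ^ (s + 1) / (k ^ 2 + t ^ 2)`, whose derivative is
`s k ^ s / (k² + t²) - k ^ s (k² - t²) / (k² + t²)²`. -/
lemma integral_rpow_mul_sub_div_sq (hs : s < 1) (t : ℝ) :
    ∫ k in Ioi (1 : ℝ), k ^ s * (k ^ 2 - t ^ 2) / (k ^ 2 + t ^ 2) ^ 2
      = s * (∫ k in Ioi (1 : ℝ), k ^ s / (k ^ 2 + t ^ 2)) + 1 / (1 + t ^ 2) := by
  set φ' : ℝ → ℝ := fun k =>
    s * (k ^ s / (k ^ 2 + t ^ 2)) - k ^ s * (k ^ 2 - t ^ 2) / (k ^ 2 + t ^ 2) ^ 2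
  have hderiv : ∀ k ∈ Ici (1 : ℝ),
      HasDerivAt (fun k : ℝ => k ^ (s + 1) / (k ^ 2 + t ^ 2)) (φ' k) k := by
    intro k hk
    have hk0 : 0 < k := one_pos.trans_le hk
    have hsum : k ^ 2 + t ^ 2 ≠ 0 := by positivity
    refine ((Real.hasDerivAt_rpow_const (p := s + 1) (Or.inl hk0.ne')).div
      ((hasDerivAt_pow 2 k).add_const (t ^ 2)) hsum).congr_deriv ?_
    simp only [φ', add_sub_cancel_right, Real.rpow_add_one hk0.ne']
    field_simp
    ring
  have hφ'_int : IntegrableOn φ' (Ioi 1) :=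
    ((integrableOn_rpow_div_sq_add_sq hs t).const_mul s).sub
      (integrableOn_rpow_mul_sub_div_sq hs t)
  have hFTC := integral_Ioi_of_hasDerivAt_of_tendsto' hderiv hφ'_int
    (tendsto_rpow_add_one_div_sq_add_sq hs t)
  rw [integral_sub ((integrableOn_rpow_div_sq_add_sq hs t).const_mul s)
    (integrableOn_rpow_mul_sub_div_sq hs t), integral_const_mul] at hFTC
  simp only [Real.one_rpow, one_pow] at hFTC
  linarith

lemma le_integral_rpow_div_sq_add_sq (hs : s < 1) {t : ℝ} (ht : 1 ≤ t) :
    t ^ (s - 1) / (2 * (1 - s)) ≤ ∫ k in Ioi (1 : ℝ), k ^ s / (k ^ 2 + t ^ 2) := by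
  have ht0 : 0 < t := one_pos.trans_le ht
  have hint := integrableOn_rpow_div_sq_add_sq hs t
  calc t ^ (s - 1) / (2 * (1 - s)) = ∫ k in Ioi t, k ^ (s - 2) / 2 := by
        rw [integral_div, integral_Ioi_rpow_of_lt (by linarith) ht0]
        have : s - 1 ≠ 0 := by linarith
        have : 1 - s ≠ 0 := by linarith
        rw [show s - 2 + 1 = s - 1 by ring]
        field_simp
        ring
    _ ≤ ∫ k in Ioi t, k ^ s / (k ^ 2 + t ^ 2) := by
        refine setIntegral_mono_on ((integrableOn_Ioi_rpow_of_lt (by linarith) ht0).div_const 2)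
          (hint.mono_set (Ioi_subset_Ioi ht)) measurableSet_Ioi fun k hk => ?_
        have hk0 : 0 < k := ht0.trans hk
        rw [Real.rpow_sub hk0, Real.rpow_two, div_div]
        gcongr
        nlinarith [mem_Ioi.1 hk]
    _ ≤ ∫ k in Ioi (1 : ℝ), k ^ s / (k ^ 2 + t ^ 2) :=
        setIntegral_mono_set hint
          ((ae_restrict_mem measurableSet_Ioi).mono fun k (hk : 1 < k) => by
            have : 0 < k := one_pos.trans hk; positivity)
          (Ioi_subset_Ioi ht).eventuallyLE

lemma integral_Ioc_rpow_div_sq_add_sq_le (hs : -1 < s) {t : ℝ} (ht : 1 ≤ t) :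
    ∫ k in Ioc 1 t, k ^ s / (k ^ 2 + t ^ 2) ≤ t ^ (s - 1) / (s + 1) := by
  have ht0 : 0 < t := one_pos.trans_le ht
  have hint : IntegrableOn (fun k : ℝ => k ^ s / t ^ 2) (Ioc 0 t) :=
    ((intervalIntegrable_iff_integrableOn_Ioc_of_le ht0.le).1
      (intervalIntegral.intervalIntegrable_rpow' hs)).div_const _
  calc ∫ k in Ioc 1 t, k ^ s / (k ^ 2 + t ^ 2)
      ≤ ∫ k in Ioc 1 t, k ^ s / t ^ 2 := by
        refine integral_mono_of_nonneg ?_ (hint.mono_set (Ioc_subset_Ioc_left zero_le_one)) ?_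
          <;> filter_upwards [ae_restrict_mem measurableSet_Ioc] with k hk
          <;> have : 0 < k := one_pos.trans hk.1
        · positivity
        · gcongr
          nlinarith
    _ ≤ ∫ k in Ioc 0 t, k ^ s / t ^ 2 :=
        setIntegral_mono_set hint
          ((ae_restrict_mem measurableSet_Ioc).mono fun k hk => by
            have : 0 < k := hk.1; positivity)
          (Ioc_subset_Ioc_left zero_le_one).eventuallyLE
    _ = t ^ (s - 1) / (s + 1) := by
        rw [integral_div, ← intervalIntegral.integral_of_le ht0.le, integral_rpow (Or.inl hs),
          Real.zero_rpow (by linarith), Real.rpow_sub_one ht0.ne', Real.rpow_add_one ht0.ne']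
        field_simp
        ring

lemma integral_Ioi_rpow_div_sq_add_sq_le (hs : s < 1) {t : ℝ} (ht : 0 < t) :
    ∫ k in Ioi t, k ^ s / (k ^ 2 + t ^ 2) ≤ t ^ (s - 1) / (1 - s) := by
  calc ∫ k in Ioi t, k ^ s / (k ^ 2 + t ^ 2) ≤ ∫ k in Ioi t, k ^ (s - 2) := by
        refine integral_mono_of_nonneg ?_ (integrableOn_Ioi_rpow_of_lt (by linarith) ht) ?_
          <;> filter_upwards [ae_restrict_mem measurableSet_Ioi] with k hk
          <;> have : 0 < k := ht.trans hk
        · positivity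
        · exact rpow_div_sq_add_sq_le this
    _ = t ^ (s - 1) / (1 - s) := by
        rw [integral_Ioi_rpow_of_lt (by linarith) ht, show s - 2 + 1 = s - 1 by ring,
          neg_div, ← div_neg, neg_sub]

lemma integral_rpow_div_sq_add_sq_le (hs₀ : -1 < s) (hs₁ : s < 1) {t : ℝ} (ht : 1 ≤ t) :
    ∫ k in Ioi (1 : ℝ), k ^ s / (k ^ 2 + t ^ 2) ≤ (1 / (s + 1) + 1 / (1 - s)) * t ^ (s - 1) := by
  have hint := integrableOn_rpow_div_sq_add_sq hs₁ t
  rw [← Ioc_union_Ioi_eq_Ioi ht, setIntegral_union (Ioc_disjoint_Ioi le_rfl) measurableSet_Ioi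
    (hint.mono_set Ioc_subset_Ioi_self) (hint.mono_set (Ioi_subset_Ioi ht))]
  have h₁ := integral_Ioc_rpow_div_sq_add_sq_le hs₀ ht
  have h₂ := integral_Ioi_rpow_div_sq_add_sq_le hs₁ (one_pos.trans_le ht)
  linarith [show (1 / (s + 1) + 1 / (1 - s)) * t ^ (s - 1)
    = t ^ (s - 1) / (s + 1) + t ^ (s - 1) / (1 - s) by ring]

lemma le_integral_rpow_mul_sub_div_sq {t : ℝ} (hs₀ : 0 ≤ s) (hs₁ : s < 1) (ht : 1 ≤ t) :
    s / (2 * (1 - s)) * t ^ (s - 1)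
      ≤ ∫ k in Ioi (1 : ℝ), k ^ s * (k ^ 2 - t ^ 2) / (k ^ 2 + t ^ 2) ^ 2 := by
  rw [integral_rpow_mul_sub_div_sq hs₁]
  have hH := mul_le_mul_of_nonneg_left (le_integral_rpow_div_sq_add_sq hs₁ ht) hs₀
  have : 0 ≤ 1 / (1 + t ^ 2) := by positivity
  calc s / (2 * (1 - s)) * t ^ (s - 1) = s * (t ^ (s - 1) / (2 * (1 - s))) := by ring
    _ ≤ _ := by linarith

end

lemma div_le_inv_one_add_mul_sq_mul {r c A B F G t : ℝ} (hr : -1 ≤ r) (hc : 0 ≤ c) (hA : 0 ≤ A)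
    (hB : 0 ≤ B) (ht : 1 ≤ t) (hG₀ : 0 ≤ G) (hF : A * t ^ r ≤ F) (hG : G ≤ B * t ^ (r - 1)) :
    A / (1 + c * B) / t ≤ (1 + c * t ^ 2 * G)⁻¹ * F := by
  have ht₀ : 0 < t := one_pos.trans_le ht
  have hpow : t ^ 2 * t ^ (r - 1) = t ^ (r + 1) := by
    rw [← Real.rpow_natCast, ← Real.rpow_add ht₀]; ring_nf
  have hone : 1 ≤ t ^ (r + 1) := Real.one_le_rpow ht (by linarith)
  have hden : 1 + c * t ^ 2 * G ≤ (1 + c * B) * t ^ (r + 1) := by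
    have : c * t ^ 2 * G ≤ c * B * t ^ (r + 1) := by
      rw [← hpow]
      have := mul_le_mul_of_nonneg_left hG (by positivity : 0 ≤ c * t ^ 2)
      linarith
    nlinarith
  calc A / (1 + c * B) / t = A * t ^ r / ((1 + c * B) * t ^ (r + 1)) := by
        rw [Real.rpow_add_one ht₀.ne']
        field_simp
    _ ≤ F / (1 + c * t ^ 2 * G) := by
        gcongr
        exact (by positivity : 0 ≤ A * t ^ r).trans hF
    _ = (1 + c * t ^ 2 * G)⁻¹ * F := div_eq_inv_mul _ _

lemma tendsto_intervalIntegral_atTop_of_div_le {f : ℝ → ℝ} {K : ℝ} (hf : Continuous f)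
    (hK : 0 < K) (hbound : ∀ t, 1 ≤ t → K / t ≤ f t) (a : ℝ) :
    Tendsto (fun τ => ∫ t in a..τ, f t) atTop atTop := by
  refine tendsto_atTop_mono' _ ?_ <| tendsto_atTop_add_const_left _ (∫ t in a..1, f t)
    (Real.tendsto_log_atTop.const_mul_atTop hK)
  filter_upwards [eventually_ge_atTop 1] with τ hτ
  rw [← intervalIntegral.integral_add_adjacent_intervals (hf.intervalIntegrable a 1)
    (hf.intervalIntegrable 1 τ)]
  gcongr
  calc K * Real.log τ = ∫ t in (1 : ℝ)..τ, K * t⁻¹ := by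
        rw [intervalIntegral.integral_const_mul, integral_inv_of_pos one_pos (by linarith),
          div_one]
    _ ≤ ∫ t in (1 : ℝ)..τ, f t :=
        intervalIntegral.integral_mono_on hτ
          ((intervalIntegrable_inv_iff.2
            (Or.inr (notMem_uIcc_of_lt one_pos (by linarith)))).const_mul K)
          (hf.intervalIntegrable 1 τ)
          fun t ht => (div_eq_mul_inv K t).symm.trans_le (hbound t ht.1)

/-- Quantitative core of Proposition 6.5: for `α ∈ (0,1/2)`, `c > 0`,
`g(t) = ∫₁^∞ k^{2α−1}/(k²+t²) dk` and
`u(t) = (1 + c t² g(t))⁻¹ ∫₁^∞ k^{2α}(k²−t²)/(k²+t²)² dk`, the function `u` is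
integrable on `(0,T)` for every `T > 0` and `∫₀^τ u(t) dt → +∞` as `τ → +∞`. -/
theorem trace_VV_star_diverges
    (α : ℝ) (hα : α ∈ Set.Ioo (0:ℝ) (1/2)) (c : ℝ) (hc : 0 < c)
    (g u : ℝ → ℝ)
    (hg : ∀ t, g t = ∫ k in Set.Ioi (1:ℝ), k ^ (2 * α - 1) / (k ^ 2 + t ^ 2))
    (hu : ∀ t, u t = (1 + c * t ^ 2 * g t)⁻¹ *
        ∫ k in Set.Ioi (1:ℝ), k ^ (2 * α) * (k ^ 2 - t ^ 2) / (k ^ 2 + t ^ 2) ^ 2) :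
    (∀ T : ℝ, 0 < T → IntegrableOn u (Set.Ioo 0 T)) ∧
    Filter.Tendsto (fun τ : ℝ => ∫ t in (0:ℝ)..τ, u t) Filter.atTop Filter.atTop := by
  obtain ⟨hα₀, hα₁⟩ := hα
  have hg₀ (t : ℝ) : 0 ≤ g t := hg t ▸ integral_rpow_div_sq_add_sq_nonneg _ t
  have hg_cont : Continuous g := by
    simpa only [← funext hg] using
      continuous_integral_rpow_div_sq_add_sq (s := 2 * α - 1) (by linarith)
  have hden (t : ℝ) : 0 < 1 + c * t ^ 2 * g t :=
    add_pos_of_pos_of_nonneg one_pos (mul_nonneg (by positivity) (hg₀ t))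
  have hu_cont : Continuous u := by
    rw [funext hu]
    exact ((continuous_const.add (by fun_prop)).inv₀ fun t => (hden t).ne').mul
      (continuous_integral_rpow_mul_sub_div_sq (by linarith))
  have hA : 0 < 2 * α / (2 * (1 - 2 * α)) := div_pos (by linarith) (by linarith)
  have hB : 0 ≤ 1 / (2 * α - 1 + 1) + 1 / (1 - (2 * α - 1)) :=
    add_nonneg (one_div_nonneg.2 (by linarith)) (one_div_nonneg.2 (by linarith))
  refine ⟨fun T _ => hu_cont.integrableOn_Icc.mono_set Ioo_subset_Icc_self,
    tendsto_intervalIntegral_atTop_of_div_le hu_cont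
      (div_pos hA (add_pos_of_pos_of_nonneg one_pos (mul_nonneg hc.le hB))) (fun t ht => ?_) 0⟩
  rw [hu t]
  exact div_le_inv_one_add_mul_sq_mul (by linarith) hc.le hA.le hB ht (hg₀ t)
    (le_integral_rpow_mul_sub_div_sq (by positivity) (by linarith) ht)
    (hg t ▸ integral_rpow_div_sq_add_sq_le (by linarith) (by linarith) ht)
end
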